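/- arXiv:2605.30092 — 4 statements merged into one kernel-verified Lean document; each statement's English description precedes it below -/
import Mathlib

section
/- If G is a vertex-transitive finite simple graph, then the product of the independence number α(G) and the clique number ω(G) is at most the number of vertices of G. -/
/-- The independence number of `G` is the clique number of the complement. -/
noncomputable def SimpleGraph.indepNumCompl {V : Type*} (G : SimpleGraph V) : ℕ :=
  Gᶜ.cliqueNum

/-- Clique-coclique bound for vertex-transitive graphs. -/
theorem clique_coclique_bound {V : Type*} [Fintype V] (G : SimpleGraph V)
    (hvt : ∀ v w : V, ∃ f : G ≃g G, f v = w) :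
    G.indepNumCompl * G.cliqueNum ≤ Fintype.card V := by
  classical
  obtain ⟨C, hC⟩ := G.exists_isNClique_cliqueNum
  obtain ⟨I, hI⟩ := Gᶜ.exists_isNClique_cliqueNum
  rcases C.eq_empty_or_nonempty with hCe | ⟨c₀, hc₀⟩
  · rw [← hC.2, hCe]; simp
  -- the set of automorphisms, as permutations
  set A : Finset (Equiv.Perm V) :=
    Finset.univ.filter (fun g => ∀ a b, G.Adj (g a) (g b) ↔ G.Adj a b) with hA
  have hmemA : ∀ g : Equiv.Perm V, g ∈ A ↔ ∀ a b, G.Adj (g a) (g b) ↔ G.Adj a b := by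
    intro g; simp [hA]
  have hmul : ∀ g₁ g₂ : Equiv.Perm V, g₁ ∈ A → g₂ ∈ A → g₁ * g₂ ∈ A := by
    intro g₁ g₂ h1 h2
    rw [hmemA] at *
    intro a b
    simp only [Equiv.Perm.mul_apply]
    rw [h1, h2]
  have hinv : ∀ g : Equiv.Perm V, g ∈ A → g⁻¹ ∈ A := by
    intro g hg
    rw [hmemA] at *
    intro a b
    conv_rhs => rw [← (Equiv.apply_symm_apply g a : g (g⁻¹ a) = a), ← (Equiv.apply_symm_apply g b : g (g⁻¹ b) = b)]
    rw [hg]; rfl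
  have hiso : ∀ f : G ≃g G, f.toEquiv ∈ A := by
    intro f
    rw [hmemA]
    intro a b
    exact f.map_adj_iff
  have hone : (1 : Equiv.Perm V) ∈ A := by rw [hmemA]; simp
  -- all fibers have the same cardinality
  set t : ℕ := (A.filter (fun g => g c₀ = c₀)).card with ht
  have hTcard : ∀ c v : V, (A.filter (fun g => g c = v)).card = t := by
    intro c v
    obtain ⟨σ, hσ⟩ := hvt c₀ c
    obtain ⟨τ, hτ⟩ := hvt v c₀
    rw [ht]
    refine Finset.card_nbij' (fun g => τ.toEquiv * g * σ.toEquiv)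
      (fun g => τ.toEquiv⁻¹ * g * σ.toEquiv⁻¹) ?_ ?_ ?_ ?_
    · intro g hg
      simp only [Finset.mem_coe, Finset.mem_filter] at hg ⊢
      refine ⟨Finset.mem_filter.mp (hmul _ _ (hmul _ _ (hiso τ) hg.1) (hiso σ)) |>.2
        |> fun _ => ?_, ?_⟩
      · exact (hmul _ _ (hmul _ _ (hiso τ) hg.1) (hiso σ)) |> fun h => (hmemA _).mpr ((hmemA _).mp h)
      · simp only [Equiv.Perm.mul_apply]
        show τ (g (σ c₀)) = c₀
        rw [hσ, hg.2, hτ]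
    · intro g hg
      simp only [Finset.mem_coe, Finset.mem_filter] at hg ⊢
      constructor
      · exact hmul _ _ (hmul _ _ (hinv _ (hiso τ)) hg.1) (hinv _ (hiso σ))
      · simp only [Equiv.Perm.mul_apply]
        show τ.toEquiv⁻¹ (g (σ.toEquiv⁻¹ c)) = v
        have h1 : σ.toEquiv⁻¹ c = c₀ := by
          apply σ.toEquiv.injective; simp [hσ]
        have h2 : τ.toEquiv⁻¹ c₀ = v := by
          apply τ.toEquiv.injective; simp [hτ]
        rw [h1, hg.2, h2]
    · intro g hg; group
    · intro g hg; group
  have htpos : 0 < t := by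
    rw [ht]
    refine Finset.card_pos.mpr ⟨1, ?_⟩
    simp [hone]
  have hcardA : A.card = Fintype.card V * t := by
    rw [Finset.card_eq_sum_card_fiberwise (f := fun g => g c₀) (t := Finset.univ)
      (fun g _ => Finset.mem_univ _)]
    simp only [hTcard]
    simp [Finset.card_univ, mul_comm]
  -- the double counting
  have key : ∀ g ∈ A, ((C ×ˢ I).filter (fun p => g p.1 = p.2)).card ≤ 1 := by
    intro g hg
    rw [hmemA] at hg
    refine Finset.card_le_one.mpr ?_
    rintro ⟨c₁, v₁⟩ h₁ ⟨c₂, v₂⟩ h₂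
    simp only [Finset.mem_filter, Finset.mem_product] at h₁ h₂
    obtain ⟨⟨hc₁, hv₁⟩, he₁⟩ := h₁
    obtain ⟨⟨hc₂, hv₂⟩, he₂⟩ := h₂
    by_cases hcc : c₁ = c₂
    · subst hcc; simp_all
    · exfalso
      have hadj : G.Adj c₁ c₂ := hC.1 hc₁ hc₂ hcc
      have hadj' : G.Adj v₁ v₂ := by
        rw [← he₁, ← he₂, hg]; exact hadj
      have hne : v₁ ≠ v₂ := hadj'.ne
      have : Gᶜ.Adj v₁ v₂ := hI.1 hv₁ hv₂ hne
      exact this.2 hadj'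
  have hS : ∑ g ∈ A, ((C ×ˢ I).filter (fun p => g p.1 = p.2)).card
      = C.card * I.card * t := by
    have : ∀ g : Equiv.Perm V, ((C ×ˢ I).filter (fun p => g p.1 = p.2)).card
        = ∑ p ∈ C ×ˢ I, if g p.1 = p.2 then 1 else 0 := by
      intro g; rw [Finset.card_filter]
    simp_rw [this]
    rw [Finset.sum_comm]
    have : ∀ p ∈ C ×ˢ I, ∑ g ∈ A, (if g p.1 = p.2 then 1 else 0) = t := by
      intro p _
      rw [← Finset.card_filter]
      exact hTcard p.1 p.2
    rw [Finset.sum_congr rfl this]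
    rw [Finset.sum_const, Finset.card_product]
    ring
  have hle : C.card * I.card * t ≤ A.card := by
    rw [← hS]
    calc ∑ g ∈ A, ((C ×ˢ I).filter (fun p => g p.1 = p.2)).card
        ≤ ∑ _g ∈ A, 1 := Finset.sum_le_sum key
      _ = A.card := by simp
  rw [hcardA] at hle
  have := Nat.le_of_mul_le_mul_right hle htpos
  rw [SimpleGraph.indepNumCompl, ← hC.2, ← hI.2]
  rw [mul_comm] at this
  omega
end

section
/- Let H be a 3-uniform hypergraph on n vertices with m edges. The number of unordered pairs of distinct edges of H sharing exactly one vertex is at least (1/2)·(3(n-3)(n-4)/2 · m²/C(n,3) - (2n-11)·(m - m²/C(n,3))), provided n ≥ 7. -/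
/-!
Let `y v` and `z p` be the degrees of vertices and the codegrees of pairs. Sorting ordered pairs
of edges by the size of their intersection shows that the number of ordered pairs meeting in
exactly one vertex is `∑ y² - 2 ∑ z² + 3m`. The bound is therefore an inequality between `∑ y²`,
`∑ z²` and `m`, and its slack is a sum of two nonnegative terms.

The first is Cauchy–Schwarz, `(∑ y)² ≤ n ∑ y²`. The second is Bessel's inequality for the
projection of the indicator `1_H` (a vector indexed by 3-sets) onto the image of the map
`(W u) e = ∑_{p ⊆ e} u p`: since `Wᵀ 1_H = z`, any solution of the normal equation `Wᵀ W u = z`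
satisfies `⟨u, z⟩ = ‖W u‖² ≤ ‖1_H‖² = m`. Counting the 3-sets through two pairs gives
`‖W u‖² = (n - 4) ∑ u² + ∑_v (∑_{p ∋ v} u p)²`, and with this the normal equation is solved
explicitly by an affine combination of `z`, `p ↦ ∑_{v ∈ p} y v` and `m`.
-/

open Finset

theorem Nat.cast_choose_three (n : ℕ) : (n.choose 3 : ℝ) = n * (n - 1) * (n - 2) / 6 := by
  induction n with
  | zero => simp
  | succ n ih =>
    rw [Nat.choose_succ_succ', Nat.cast_add, ih, Nat.cast_choose_two]
    push_cast
    ring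

theorem sum_powersetCard_one_univ {α : Type*} [Fintype α] (g : Finset α → ℝ) :
    ∑ s ∈ powersetCard 1 univ, g s = ∑ v, g {v} := by
  rw [powersetCard_one, sum_map]
  rfl

section DoubleCounting

variable {ι κ R : Type*} [Semiring R] (s : Finset ι) (t : Finset κ) (P : ι → κ → Prop)
  [∀ i a, Decidable (P i a)] (f : κ → R)

theorem sum_sum_filter_eq_sum_card_filter_mul :
    ∑ i ∈ s, ∑ a ∈ t with P i a, f a = ∑ a ∈ t, #{i ∈ s | P i a} * f a := by
  simp_rw [sum_filter, natCast_card_filter, sum_mul, ite_mul, one_mul, zero_mul]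
  exact sum_comm

theorem sum_sq_sum_filter_eq_sum_sum_card_filter_mul :
    ∑ i ∈ s, (∑ a ∈ t with P i a, f a) ^ 2 =
      ∑ a ∈ t, ∑ b ∈ t, #{i ∈ s | P i a ∧ P i b} * (f a * f b) := by
  simp_rw [sum_filter, sq, sum_mul_sum, ite_zero_mul_ite_zero, natCast_card_filter, sum_mul,
    ite_mul, one_mul, zero_mul]
  rw [sum_comm]
  exact sum_congr rfl fun _ _ => sum_comm

end DoubleCounting

section Pairs

variable {α : Type*} [Fintype α] [DecidableEq α]

def starSum (u : Finset α → ℝ) (v : α) : ℝ := ∑ p ∈ powersetCard 2 univ with v ∈ p, u p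

theorem card_powersetCard_three_filter_subset_and_subset {p q : Finset α} (hp : #p = 2)
    (hq : #q = 2) :
    (#{e ∈ powersetCard 3 univ | p ⊆ e ∧ q ⊆ e} : ℝ) =
      (if p = q then (Fintype.card α : ℝ) - 4 else 0) + #(p ∩ q) := by
  simp_rw [← union_subset_iff]
  have hpn : 2 ≤ Fintype.card α := hp ▸ card_le_univ p
  by_cases hpq : p = q
  · subst hpq
    rw [union_self, inter_self, if_pos rfl, hp, card_filter_powersetCard_subset _ _ _ (subset_univ _)
      (by omega), card_univ, hp, Nat.choose_one_right, Nat.cast_sub hpn]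
    push_cast
    ring
  · have hunion : #(p ∪ q) + #(p ∩ q) = 4 := by rw [card_union_add_card_inter, hp, hq]
    have hinter : #(p ∩ q) < 2 := by
      refine lt_of_le_of_ne (hp ▸ card_le_card inter_subset_left) fun h => hpq ?_
      have hpi : p ∩ q = p := eq_of_subset_of_card_le inter_subset_left (by omega)
      have hqi : p ∩ q = q := eq_of_subset_of_card_le inter_subset_right (by omega)
      rw [← hpi, hqi]
    rw [if_neg hpq, zero_add]
    interval_cases h : #(p ∩ q)
    · rw [Nat.cast_zero, Nat.cast_eq_zero, card_eq_zero, filter_eq_empty_iff]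
      intro e he hsub
      have := card_le_card hsub
      rw [(mem_powersetCard.1 he).2] at this
      omega
    · rw [card_filter_powersetCard_subset _ _ _ (subset_univ _) (by omega),
        show 3 - #(p ∪ q) = 0 by omega, Nat.choose_zero_right, Nat.cast_one]

theorem sum_sq_sum_filter_subset_powersetCard_three (u : Finset α → ℝ) :
    ∑ e ∈ powersetCard 3 univ, (∑ p ∈ powersetCard 2 univ with p ⊆ e, u p) ^ 2 =
      ((Fintype.card α : ℝ) - 4) * ∑ p ∈ powersetCard 2 univ, u p ^ 2 + ∑ v, starSum u v ^ 2 := by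
  unfold starSum
  rw [sum_sq_sum_filter_eq_sum_sum_card_filter_mul, sum_sq_sum_filter_eq_sum_sum_card_filter_mul,
    mul_sum, ← sum_add_distrib]
  refine sum_congr rfl fun p hp => ?_
  rw [sum_congr rfl fun q hq => by
    rw [card_powersetCard_three_filter_subset_and_subset (mem_powersetCard.1 hp).2
      (mem_powersetCard.1 hq).2]]
  simp only [add_mul, sum_add_distrib, ite_mul, zero_mul, sum_ite_eq, if_pos hp, ← mem_inter,
    filter_mem_eq_inter, univ_inter, sq]

theorem sum_sum_mem_mul_eq_sum_mul_starSum (f : α → ℝ) (u : Finset α → ℝ) :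
    ∑ p ∈ powersetCard 2 univ, (∑ v ∈ p, f v) * u p = ∑ v, f v * starSum u v := by
  unfold starSum
  simp_rw [sum_mul, mul_sum]
  exact sum_comm' fun p v => by simp

theorem starSum_linear_combination (a b c : ℝ) (f g : Finset α → ℝ) (v : α) :
    starSum (fun p => a * f p + b * g p + c) v =
      a * starSum f v + b * starSum g v + starSum (fun _ => c) v := by
  simp only [starSum, sum_add_distrib, mul_sum]

theorem card_powersetCard_two_filter_mem_and_mem (v w : α) :
    (#{p ∈ powersetCard 2 univ | v ∈ p ∧ w ∈ p} : ℝ) =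
      (if v = w then (Fintype.card α : ℝ) - 2 else 0) + 1 := by
  have hpair : {p ∈ powersetCard 2 (univ : Finset α) | v ∈ p ∧ w ∈ p} =
      {p ∈ powersetCard 2 (univ : Finset α) | {v, w} ⊆ p} := by
    simp only [insert_subset_iff, singleton_subset_iff]
  rw [hpair, card_filter_powersetCard_subset {v, w} univ 2 (subset_univ _) card_le_two, card_univ]
  by_cases hvw : v = w
  · subst hvw
    have hn : 1 ≤ Fintype.card α := Fintype.card_pos_iff.2 ⟨v⟩
    rw [pair_eq_singleton, card_singleton, Nat.choose_one_right, Nat.cast_sub hn, if_pos rfl]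
    push_cast
    ring
  · rw [card_pair hvw, Nat.sub_self, Nat.choose_zero_right, if_neg hvw]
    simp

theorem card_powersetCard_two_filter_mem_and_subset {e : Finset α} (he : #e = 3) (v : α) :
    (#{p ∈ powersetCard 2 univ | v ∈ p ∧ p ⊆ e} : ℝ) = if v ∈ e then 2 else 0 := by
  split_ifs with hv
  · have hsub : {p ∈ powersetCard 2 (univ : Finset α) | v ∈ p ∧ p ⊆ e} =
        {p ∈ powersetCard 2 e | {v} ⊆ p} := by
      ext p
      simp only [mem_filter, mem_powersetCard, subset_univ, true_and, singleton_subset_iff]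
      tauto
    rw [hsub, card_filter_powersetCard_subset {v} e 2 (singleton_subset_iff.2 hv) (by simp), he,
      card_singleton]
    norm_num
  · rw [Nat.cast_eq_zero, card_eq_zero, filter_eq_empty_iff]
    rintro p - ⟨hvp, hpe⟩
    exact hv (hpe hvp)

theorem starSum_const (c : ℝ) (v : α) :
    starSum (fun _ => c) v = ((Fintype.card α : ℝ) - 1) * c := by
  have h := card_powersetCard_two_filter_mem_and_mem v v
  simp only [and_self, ↓reduceIte] at h
  rw [starSum, sum_const, nsmul_eq_mul, h]
  ring

theorem starSum_sum_mem (f : α → ℝ) (v : α) :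
    starSum (fun p => ∑ w ∈ p, f w) v = ((Fintype.card α : ℝ) - 2) * f v + ∑ w, f w := by
  have hfilter (p : Finset α) : ∑ w ∈ p, f w = ∑ w ∈ univ with w ∈ p, f w := by
    rw [filter_mem_eq_inter, univ_inter]
  rw [starSum, sum_congr rfl fun p _ => hfilter p]
  simp_rw [sum_sum_filter_eq_sum_card_filter_mul, filter_filter,
    card_powersetCard_two_filter_mem_and_mem, add_mul, one_mul, sum_add_distrib, ite_mul, zero_mul,
    sum_ite_eq, if_pos (mem_univ v)]

end Pairs

def Finset.codegree {α : Type*} [DecidableEq α] (H : Finset (Finset α)) (s : Finset α) : ℕ :=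
  #{e ∈ H | s ⊆ e}

section Codegree

variable {α : Type*} [Fintype α] [DecidableEq α] (H : Finset (Finset α))

theorem filter_subset_powersetCard_univ (k : ℕ) (e : Finset α) :
    {s ∈ powersetCard k (univ : Finset α) | s ⊆ e} = powersetCard k e := by
  ext s
  simp only [mem_filter, mem_powersetCard, subset_univ, true_and]
  tauto

theorem sum_codegree (k : ℕ) :
    ∑ s ∈ powersetCard k univ, (H.codegree s : ℝ) = ∑ e ∈ H, ((#e).choose k : ℝ) := by
  have h := sum_sum_filter_eq_sum_card_filter_mul (powersetCard k univ) H (fun s e => s ⊆ e)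
    (fun _ => (1 : ℝ))
  simp only [sum_const, nsmul_eq_mul, mul_one, filter_subset_powersetCard_univ,
    card_powersetCard] at h
  exact h

theorem sum_codegree_sq (k : ℕ) :
    ∑ s ∈ powersetCard k univ, (H.codegree s : ℝ) ^ 2 =
      ∑ x ∈ H ×ˢ H, ((#(x.1 ∩ x.2)).choose k : ℝ) := by
  have h := sum_sq_sum_filter_eq_sum_sum_card_filter_mul (powersetCard k univ) H
    (fun s e => s ⊆ e) (fun _ => (1 : ℝ))
  simp only [sum_const, nsmul_eq_mul, mul_one, ← subset_inter_iff, filter_subset_powersetCard_univ,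
    card_powersetCard] at h
  rw [sum_product]
  exact h

variable {H}

theorem sum_codegree_singleton (hH : ∀ e ∈ H, #e = 3) :
    ∑ v, (H.codegree {v} : ℝ) = 3 * #H := by
  rw [← sum_powersetCard_one_univ (fun s => (H.codegree s : ℝ)), sum_codegree,
    sum_congr rfl fun e he => by rw [hH e he], sum_const, nsmul_eq_mul]
  norm_num [mul_comm]

theorem sum_codegree_pair (hH : ∀ e ∈ H, #e = 3) :
    ∑ p ∈ powersetCard 2 univ, (H.codegree p : ℝ) = 3 * #H := by
  rw [sum_codegree, sum_congr rfl fun e he => by rw [hH e he], sum_const, nsmul_eq_mul]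
  norm_num [mul_comm]

theorem starSum_codegree (hH : ∀ e ∈ H, #e = 3) (v : α) :
    starSum (fun p => (H.codegree p : ℝ)) v = 2 * H.codegree {v} := by
  have h := sum_sum_filter_eq_sum_card_filter_mul {p ∈ powersetCard 2 univ | v ∈ p} H
    (fun p e => p ⊆ e) (fun _ => (1 : ℝ))
  simp only [sum_const, nsmul_eq_mul, mul_one, filter_filter] at h
  simp only [starSum, Finset.codegree]
  rw [h, sum_congr rfl fun e he => card_powersetCard_two_filter_mem_and_subset (hH e he) v,
    natCast_card_filter, mul_sum]
  simp [singleton_subset_iff]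

theorem starSum_affine_codegree (hH : ∀ e ∈ H, #e = 3) (a b c : ℝ) (v : α) :
    starSum (fun p => a * H.codegree p + b * ∑ w ∈ p, (H.codegree {w} : ℝ) + c) v =
      (2 * a + ((Fintype.card α : ℝ) - 2) * b) * H.codegree {v}
        + (3 * #H * b + ((Fintype.card α : ℝ) - 1) * c) := by
  rw [starSum_linear_combination, starSum_codegree hH, starSum_sum_mem, starSum_const,
    sum_codegree_singleton hH]
  ring

theorem sum_sum_codegree_singleton_mul_codegree (hH : ∀ e ∈ H, #e = 3) :
    ∑ p ∈ powersetCard 2 univ, (∑ v ∈ p, (H.codegree {v} : ℝ)) * H.codegree p =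
      2 * ∑ v, (H.codegree {v} : ℝ) ^ 2 := by
  rw [sum_sum_mem_mul_eq_sum_mul_starSum, mul_sum]
  exact sum_congr rfl fun v _ => by rw [starSum_codegree hH]; ring

theorem sum_mul_codegree_le_card (hH : ∀ e ∈ H, #e = 3) (u : Finset α → ℝ)
    (hu : ∀ p ∈ powersetCard 2 univ,
      ((Fintype.card α : ℝ) - 4) * u p + ∑ v ∈ p, starSum u v = H.codegree p) :
    ∑ p ∈ powersetCard 2 univ, u p * H.codegree p ≤ #H := by
  set W : Finset α → ℝ := fun e => ∑ p ∈ powersetCard 2 univ with p ⊆ e, u p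
  have hnorm : ∑ e ∈ powersetCard 3 univ, W e ^ 2 =
      ∑ p ∈ powersetCard 2 univ, u p * H.codegree p := by
    rw [sum_sq_sum_filter_subset_powersetCard_three, ← sum_congr rfl fun p hp =>
      congrArg (u p * ·) (hu p hp)]
    simp only [mul_add, sum_add_distrib, sq]
    congr 1
    · rw [mul_sum]
      exact sum_congr rfl fun p _ => by ring
    · rw [← sum_sum_mem_mul_eq_sum_mul_starSum]
      exact sum_congr rfl fun p _ => mul_comm _ _
  have hcount : ∑ e ∈ H, W e = ∑ p ∈ powersetCard 2 univ, u p * H.codegree p := by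
    rw [sum_sum_filter_eq_sum_card_filter_mul]
    exact sum_congr rfl fun p _ => mul_comm _ _
  -- `2 w - 1 ≤ w²` on the edges and `0 ≤ w²` off them: this is `0 ≤ ‖1_H - W‖²`.
  have hle : ∑ e ∈ H, (2 * W e - 1) ≤ ∑ e ∈ powersetCard 3 univ, W e ^ 2 :=
    (sum_le_sum fun e _ => by nlinarith [sq_nonneg (W e - 1)]).trans
      (sum_le_sum_of_subset_of_nonneg (fun e he => mem_powersetCard.2 ⟨subset_univ e, hH e he⟩)
        fun e _ _ => sq_nonneg (W e))
  rw [sum_sub_distrib, ← mul_sum, hcount, hnorm, sum_const, nsmul_one] at hle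
  linarith

theorem card_filter_card_inter_eq_one (hH : ∀ e ∈ H, #e = 3) :
    (#{x ∈ H ×ˢ H | #(x.1 ∩ x.2) = 1} : ℝ) =
      ∑ v, (H.codegree {v} : ℝ) ^ 2 - 2 * ∑ p ∈ powersetCard 2 univ, (H.codegree p : ℝ) ^ 2
        + 3 * #H := by
  have hdiag : (#H : ℝ) = ∑ x ∈ H ×ˢ H, if x.1 = x.2 then 1 else 0 := by
    rw [sum_product]
    simp
  rw [← sum_powersetCard_one_univ (fun s => (H.codegree s : ℝ) ^ 2), sum_codegree_sq,
    sum_codegree_sq, hdiag, natCast_card_filter, mul_sum, mul_sum, ← sum_sub_distrib,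
    ← sum_add_distrib]
  refine sum_congr rfl fun x hx => ?_
  obtain ⟨he, hf⟩ := mem_product.1 hx
  have hle : #(x.1 ∩ x.2) ≤ 3 := hH _ he ▸ card_le_card inter_subset_left
  have hdiag_iff : #(x.1 ∩ x.2) = 3 ↔ x.1 = x.2 := by
    refine ⟨fun h => ?_, fun h => by rw [h, inter_self, hH _ hf]⟩
    have h1 : x.1 ∩ x.2 = x.1 := eq_of_subset_of_card_le inter_subset_left (by rw [h, hH _ he])
    have h2 : x.1 ∩ x.2 = x.2 := eq_of_subset_of_card_le inter_subset_right (by rw [h, hH _ hf])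
    rw [← h1, h2]
  clear hdiag
  interval_cases h : #(x.1 ∩ x.2) <;> norm_num [← hdiag_iff]

theorem sum_sq_codegree_le (hH : ∀ e ∈ H, #e = 3) (hn : 5 ≤ Fintype.card α) :
    ((Fintype.card α : ℝ) - 2) * ((Fintype.card α : ℝ) - 3) *
          ∑ p ∈ powersetCard 2 univ, (H.codegree p : ℝ) ^ 2
        - 2 * ((Fintype.card α : ℝ) - 2) * ∑ v, (H.codegree {v} : ℝ) ^ 2 + 6 * (#H : ℝ) ^ 2 ≤
      ((Fintype.card α : ℝ) - 2) * ((Fintype.card α : ℝ) - 3) * ((Fintype.card α : ℝ) - 4) * #H := by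
  have hn' : (5 : ℝ) ≤ Fintype.card α := by exact_mod_cast hn
  set n : ℝ := ((Fintype.card α : ℕ) : ℝ)
  set m : ℝ := ((#H : ℕ) : ℝ)
  set y : α → ℝ := fun v => H.codegree {v}
  set z : Finset α → ℝ := fun p => H.codegree p
  -- The normal equation preserves the span of `z`, `p ↦ ∑_{v ∈ p} y v` and the constants;
  -- `a`, `b`, `c` solve it there.
  set a : ℝ := 1 / (n - 4)
  set b : ℝ := -1 / ((n - 3) * (n - 4))
  set c : ℝ := 2 * m / ((n - 2) * (n - 3) * (n - 4))
  set u : Finset α → ℝ := fun p => a * z p + b * ∑ v ∈ p, y v + c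
  have h2 : n - 2 ≠ 0 := by linarith
  have h3 : n - 3 ≠ 0 := by linarith
  have h4 : n - 4 ≠ 0 := by linarith
  have hstar (v : α) :
      starSum u v = (2 * a + (n - 2) * b) * y v + (3 * m * b + (n - 1) * c) :=
    starSum_affine_codegree hH a b c v
  have hnormal (p : Finset α) (hp : p ∈ powersetCard 2 univ) :
      (n - 4) * u p + ∑ v ∈ p, starSum u v = z p := by
    have ha : (n - 4) * a = 1 := by simp only [a]; field_simp
    have hb : 2 * a + (2 * n - 6) * b = 0 := by simp only [a, b]; field_simp; ring
    have hc : 6 * m * b + (3 * n - 6) * c = 0 := by simp only [b, c]; field_simp; ring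
    simp only [u, hstar, sum_add_distrib, ← mul_sum, sum_const, (mem_powersetCard.1 hp).2]
    linear_combination z p * ha + (∑ v ∈ p, y v) * hb + hc
  have hzu : ∑ p ∈ powersetCard 2 univ, u p * z p =
      a * ∑ p ∈ powersetCard 2 univ, z p ^ 2 + 2 * b * ∑ v, y v ^ 2 + 3 * m * c := by
    have hyz : ∑ p ∈ powersetCard 2 univ, (∑ v ∈ p, y v) * z p = 2 * ∑ v, y v ^ 2 :=
      sum_sum_codegree_singleton_mul_codegree hH
    have hz_sum : ∑ p ∈ powersetCard 2 univ, z p = 3 * m := sum_codegree_pair hH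
    simp only [u, add_mul, sum_add_distrib, mul_assoc, ← mul_sum, hyz, hz_sum, sq]
    ring
  have hle := sum_mul_codegree_le_card hH u hnormal
  rw [hzu] at hle
  have hD : 0 ≤ (n - 2) * (n - 3) * (n - 4) :=
    mul_nonneg (mul_nonneg (by linarith) (by linarith)) (by linarith)
  calc _ = (n - 2) * (n - 3) * (n - 4) *
        (a * ∑ p ∈ powersetCard 2 univ, z p ^ 2 + 2 * b * ∑ v, y v ^ 2 + 3 * m * c) := by
        simp only [a, b, c, y, z]
        field_simp
        ring
    _ ≤ (n - 2) * (n - 3) * (n - 4) * m := mul_le_mul_of_nonneg_left hle hD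

end Codegree

open Finset in
/-- Spectral supersaturation for 3-uniform hypergraphs: the number of unordered pairs
of distinct edges sharing exactly one vertex is at least
`(1/2)(3(n-3)(n-4)/2 · m²/C(n,3) - (2n-11)(m - m²/C(n,3)))` for `n ≥ 7`. -/
theorem hypergraph_unit_intersections (n : ℕ) (hn : 7 ≤ n)
    (H : Finset (Finset (Fin n))) (hcard : ∀ e ∈ H, e.card = 3)
    (m : ℕ) (hm : H.card = m) :
    (((H ×ˢ H).filter (fun p : Finset (Fin n) × Finset (Fin n) =>
        (p.1 ∩ p.2).card = 1)).card : ℝ) / 2 ≥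
      (1 / 2) * (3 * ((n : ℝ) - 3) * ((n : ℝ) - 4) / 2 * (m : ℝ) ^ 2 / (n.choose 3 : ℝ)
        - (2 * (n : ℝ) - 11) * ((m : ℝ) - (m : ℝ) ^ 2 / (n.choose 3 : ℝ))) := by
  subst hm
  have hn' : (7 : ℝ) ≤ n := by exact_mod_cast hn
  have hcore := sum_sq_codegree_le hcard (by simp only [Fintype.card_fin]; omega)
  have hCS := sq_sum_le_card_mul_sum_sq (s := univ) (f := fun v => (H.codegree {v} : ℝ))
  rw [sum_codegree_singleton hcard] at hCS
  simp only [Fintype.card_fin, card_univ] at hcore hCS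
  rw [card_filter_card_inter_eq_one hcard, Nat.cast_choose_three]
  generalize ∑ v, (H.codegree {v} : ℝ) ^ 2 = Y at *
  generalize ∑ p ∈ powersetCard 2 univ, (H.codegree p : ℝ) ^ 2 = Z at *
  generalize (#H : ℝ) = m at *
  have hY : 0 ≤ (n - 7) / (n * (n - 3)) * (n * Y - (3 * m) ^ 2) :=
    mul_nonneg (div_nonneg (by linarith) (by nlinarith)) (by linarith)
  have hZ : 0 ≤ 2 / ((n - 2) * (n - 3)) *
      ((n - 2) * (n - 3) * (n - 4) * m - ((n - 2) * (n - 3) * Z - 2 * (n - 2) * Y + 6 * m ^ 2)) :=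
    mul_nonneg (div_nonneg (by norm_num) (by nlinarith)) (by linarith)
  rw [ge_iff_le, ← sub_nonneg]
  refine (div_nonneg (add_nonneg hY hZ) zero_le_two).trans_eq ?_
  have : (n : ℝ) - 1 ≠ 0 := by linarith
  have : (n : ℝ) - 2 ≠ 0 := by linarith
  have : (n : ℝ) - 3 ≠ 0 := by linarith
  have : (n : ℝ) ≠ 0 := by linarith
  field_simp
  ring
end

section
/- For n ≥ 7, the smallest eigenvalue of the adjacency matrix of J(n,3,{1}) is -(2n-11), and its spectrum consists of exactly the four values 3(n-3)(n-4)/2, (n-4)(n-9)/2, -2n+11, and 3. -/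
/-- The generalized Johnson graph `J(n,k,L)`: vertices are the `k`-subsets of an
`n`-set, two distinct sets adjacent iff their intersection size lies in `L`. -/
def johnsonGraph (n k : ℕ) (L : Finset ℕ) :
    SimpleGraph {A : Finset (Fin n) // A.card = k} where
  Adj A B := A ≠ B ∧ (A.1 ∩ B.1).card ∈ L
  symm := by
    constructor
    intro A B h
    exact ⟨h.1.symm, by rw [Finset.inter_comm]; exact h.2⟩
  loopless := ⟨fun A h => h.1 rfl⟩

instance (n k : ℕ) (L : Finset ℕ) : DecidableRel (johnsonGraph n k L).Adj :=
  fun A B => inferInstanceAs (Decidable (_ ∧ _))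

open Finset Matrix
namespace JohnsonAux
variable (n : ℕ)
abbrev Vtx := {A : Finset (Fin n) // A.card = 3}
abbrev Pr := {p : Finset (Fin n) // p.card = 2}

lemma card_supersets (s : Finset (Fin n)) (hs : s.card ≤ 3) :
    ((univ : Finset (Finset (Fin n))).filter fun A => A.card = 3 ∧ s ⊆ A).card
      = (n - s.card).choose (3 - s.card) := by
  classical
  have hc : (sᶜ : Finset (Fin n)).card = n - s.card := by
    rw [card_compl, Fintype.card_fin]
  rw [← hc, ← Finset.card_powersetCard]
  apply Finset.card_nbij' (i := fun A => A \ s) (j := fun B => B ∪ s)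
  · intro A hA
    simp only [mem_coe, mem_filter, mem_univ, true_and] at hA
    simp only [mem_coe, mem_powersetCard]
    constructor
    · intro x hx
      simp only [mem_sdiff] at hx
      simp [hx.2]
    · rw [card_sdiff_of_subset hA.2, hA.1]
  · intro B hB
    simp only [mem_coe, mem_powersetCard] at hB
    have hdisj : Disjoint B s := by
      rw [Finset.disjoint_left]
      intro x hx
      have := hB.1 hx
      simpa using this
    simp only [mem_coe, mem_filter, mem_univ, true_and]
    refine ⟨?_, subset_union_right⟩
    rw [card_union_of_disjoint hdisj, hB.2]
    omega
  · intro A hA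
    simp only [mem_coe, mem_filter, mem_univ, true_and] at hA
    exact sdiff_union_of_subset hA.2
  · intro B hB
    simp only [mem_coe, mem_powersetCard] at hB
    have hdisj : Disjoint B s := by
      rw [Finset.disjoint_left]
      intro x hx
      have := hB.1 hx
      simpa using this
    beta_reduce
    rw [union_sdiff_right, sdiff_eq_self_of_disjoint hdisj]

lemma card_supersets_big (s : Finset (Fin n)) (hs : 3 < s.card) :
    ((univ : Finset (Finset (Fin n))).filter fun A => A.card = 3 ∧ s ⊆ A).card = 0 := by
  rw [Finset.card_eq_zero, Finset.filter_eq_empty_iff]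
  rintro A - ⟨hA, hsA⟩
  have := Finset.card_le_card hsA
  omega

lemma card_pairs_subset (t : Finset (Fin n)) :
    ((univ : Finset (Finset (Fin n))).filter fun p => p.card = 2 ∧ p ⊆ t).card
      = t.card.choose 2 := by
  rw [← Finset.card_powersetCard]
  congr 1
  ext p
  simp [Finset.mem_powersetCard, and_comm]

lemma sum_V (f : Finset (Fin n) → ℝ) :
    ∑ A : Vtx n, f A.1
      = ∑ A ∈ (univ : Finset (Finset (Fin n))).filter (fun A => A.card = 3), f A :=
  (Finset.sum_subtype _ (fun A => by simp) f).symm.symm.symm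

lemma sum_P (f : Finset (Fin n) → ℝ) :
    ∑ p : Pr n, f p.1
      = ∑ p ∈ (univ : Finset (Finset (Fin n))).filter (fun p => p.card = 2), f p :=
  (Finset.sum_subtype _ (fun p => by simp) f).symm.symm.symm

lemma sum_V_boole (P : Finset (Fin n) → Prop) [DecidablePred P] :
    ∑ A : Vtx n, (if P A.1 then (1:ℝ) else 0)
      = (((univ : Finset (Finset (Fin n))).filter fun A => A.card = 3 ∧ P A).card : ℝ) := by
  rw [show (∑ A : Vtx n, (if P A.1 then (1:ℝ) else 0)) = ∑ A : Vtx n, (fun B => if P B then (1:ℝ) else 0) A.1 from rfl,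
    sum_V n (fun B => if P B then (1:ℝ) else 0), Finset.sum_boole, Finset.filter_filter]

lemma sum_P_boole (P : Finset (Fin n) → Prop) [DecidablePred P] :
    ∑ p : Pr n, (if P p.1 then (1:ℝ) else 0)
      = (((univ : Finset (Finset (Fin n))).filter fun p => p.card = 2 ∧ P p).card : ℝ) := by
  rw [show (∑ p : Pr n, (if P p.1 then (1:ℝ) else 0)) = ∑ p : Pr n, (fun q => if P q then (1:ℝ) else 0) p.1 from rfl,
    sum_P n (fun q => if P q then (1:ℝ) else 0), Finset.sum_boole, Finset.filter_filter]


def Cm : Matrix (Vtx n) (Fin n) ℝ := Matrix.of fun A x => if x ∈ A.1 then 1 else 0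
def Dm : Matrix (Vtx n) (Pr n) ℝ := Matrix.of fun A p => if p.1 ⊆ A.1 then 1 else 0
def Em : Matrix (Pr n) (Fin n) ℝ := Matrix.of fun p x => if x ∈ p.1 then 1 else 0
def Jm (α β : Type*) : Matrix α β ℝ := Matrix.of fun _ _ => 1
lemma indicator_mul (P Q : Prop) [Decidable P] [Decidable Q] :
    (if P then (1:ℝ) else 0) * (if Q then 1 else 0) = if P ∧ Q then 1 else 0 := by
  split_ifs <;> simp_all

-- cast helpers
lemma cast_choose_n1_2 (hn : 7 ≤ n) : (((n-1).choose 2 : ℕ) : ℝ) = ((n:ℝ)-1)*((n:ℝ)-2)/2 := by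
  rw [Nat.cast_choose_two]
  have h1 : ((n-1 : ℕ) : ℝ) = (n:ℝ) - 1 := by
    push_cast [Nat.cast_sub (by omega : 1 ≤ n)]; ring
  rw [h1]; ring
lemma cast_choose_n2_1 (hn : 7 ≤ n) : (((n-2).choose 1 : ℕ) : ℝ) = (n:ℝ)-2 := by
  rw [Nat.choose_one_right]
  push_cast [Nat.cast_sub (by omega : 2 ≤ n)]; ring

lemma hCtC (hn : 7 ≤ n) :
    (Cm n)ᵀ * Cm n
      = ((n:ℝ)-2) • Jm (Fin n) (Fin n) + (((n:ℝ)-2)*((n:ℝ)-3)/2) • 1 := by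
  ext x y
  rw [Matrix.mul_apply]
  simp only [Cm, transpose_apply, of_apply, indicator_mul]
  have hpred : ∀ A : Vtx n, (x ∈ A.1 ∧ y ∈ A.1) ↔ ({x, y} : Finset (Fin n)) ⊆ A.1 := by
    intro A; rw [Finset.insert_subset_iff, Finset.singleton_subset_iff]
  rw [show (∑ A : Vtx n, if x ∈ A.1 ∧ y ∈ A.1 then (1:ℝ) else 0)
      = ∑ A : Vtx n, if ({x, y} : Finset (Fin n)) ⊆ A.1 then (1:ℝ) else 0 by
    refine Finset.sum_congr rfl fun A _ => ?_; rw [if_congr (hpred A) rfl rfl]]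
  rw [sum_V_boole n (fun s => ({x, y} : Finset (Fin n)) ⊆ s)]
  by_cases h : x = y
  · subst h
    have hcard : ({x, x} : Finset (Fin n)).card = 1 := by simp
    rw [card_supersets n _ (by rw [hcard]; omega), hcard, cast_choose_n1_2 n hn]
    simp [Jm, Matrix.one_apply]
    ring
  · have hcard : ({x, y} : Finset (Fin n)).card = 2 := by
      rw [Finset.card_insert_of_notMem (by simpa using h), Finset.card_singleton]
    rw [card_supersets n _ (by rw [hcard]; omega), hcard, cast_choose_n2_1 n hn]
    simp [Jm, Matrix.one_apply, h]


lemma CCt_apply (A B : Vtx n) :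
    (Cm n * (Cm n)ᵀ) A B = ((A.1 ∩ B.1).card : ℝ) := by
  rw [Matrix.mul_apply]
  simp only [Cm, transpose_apply, of_apply, indicator_mul]
  rw [Finset.sum_boole]
  congr 1
  rw [show univ.filter (fun x => x ∈ A.1 ∧ x ∈ B.1) = A.1 ∩ B.1 by ext x; simp]

lemma EEt_apply (p q : Pr n) :
    (Em n * (Em n)ᵀ) p q = ((p.1 ∩ q.1).card : ℝ) := by
  rw [Matrix.mul_apply]
  simp only [Em, transpose_apply, of_apply, indicator_mul]
  rw [Finset.sum_boole]
  congr 1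
  rw [show univ.filter (fun x => x ∈ p.1 ∧ x ∈ q.1) = p.1 ∩ q.1 by ext x; simp]

lemma hDtD (hn : 7 ≤ n) :
    (Dm n)ᵀ * Dm n = ((n:ℝ)-4) • 1 + Em n * (Em n)ᵀ := by
  ext p q
  rw [Matrix.mul_apply]
  simp only [Dm, transpose_apply, of_apply, indicator_mul]
  rw [show (∑ A : Vtx n, if p.1 ⊆ A.1 ∧ q.1 ⊆ A.1 then (1:ℝ) else 0)
      = ∑ A : Vtx n, if p.1 ∪ q.1 ⊆ A.1 then (1:ℝ) else 0 by
    refine Finset.sum_congr rfl fun A _ => ?_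
    rw [if_congr (Finset.union_subset_iff).symm rfl rfl]]
  rw [sum_V_boole n (fun s => p.1 ∪ q.1 ⊆ s)]
  simp only [Matrix.add_apply, Matrix.smul_apply, Matrix.one_apply, EEt_apply, smul_eq_mul]
  by_cases hpq : p = q
  · subst hpq
    rw [Finset.union_self]
    rw [card_supersets n _ (by rw [p.2]; omega), p.2, cast_choose_n2_1 n hn]
    rw [Finset.inter_self, p.2]
    simp; ring
  · have hne : p.1 ≠ q.1 := fun h => hpq (Subtype.ext h)
    have hint : (p.1 ∩ q.1).card ≤ 1 := by
      by_contra h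
      push_neg at h
      have hle : (p.1 ∩ q.1).card ≤ 2 := le_trans (Finset.card_le_card Finset.inter_subset_left) (le_of_eq p.2)
      have h2 : (p.1 ∩ q.1).card = 2 := by omega
      have : p.1 ∩ q.1 = p.1 := Finset.eq_of_subset_of_card_le Finset.inter_subset_left (by rw [h2, p.2])
      have hsub : p.1 ⊆ q.1 := by rw [← this]; exact Finset.inter_subset_right
      exact hne (Finset.eq_of_subset_of_card_le hsub (by rw [p.2, q.2]))
    have hcu : (p.1 ∪ q.1).card + (p.1 ∩ q.1).card = 4 := by
      rw [Finset.card_union_add_card_inter, p.2, q.2]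
    interval_cases h : (p.1 ∩ q.1).card
    · rw [card_supersets_big n _ (by omega)]
      simp [hpq, h]
    · rw [card_supersets n _ (by omega), show (p.1 ∪ q.1).card = 3 by omega]
      simp [hpq, h]

lemma hCtD (hn : 7 ≤ n) :
    (Cm n)ᵀ * Dm n = Jm (Fin n) (Pr n) + ((n:ℝ)-3) • (Em n)ᵀ := by
  ext x p
  rw [Matrix.mul_apply]
  simp only [Cm, Dm, transpose_apply, of_apply, indicator_mul]
  rw [show (∑ A : Vtx n, if x ∈ A.1 ∧ p.1 ⊆ A.1 then (1:ℝ) else 0)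
      = ∑ A : Vtx n, if insert x p.1 ⊆ A.1 then (1:ℝ) else 0 by
    refine Finset.sum_congr rfl fun A _ => ?_
    rw [if_congr (show (x ∈ A.1 ∧ p.1 ⊆ A.1) ↔ insert x p.1 ⊆ A.1 by rw [Finset.insert_subset_iff]) rfl rfl]]
  rw [sum_V_boole n (fun s => insert x p.1 ⊆ s)]
  simp only [Matrix.add_apply, Matrix.smul_apply, Jm, Em, of_apply, transpose_apply, smul_eq_mul]
  by_cases hx : x ∈ p.1
  · rw [Finset.insert_eq_self.mpr hx]
    rw [card_supersets n _ (by rw [p.2]; omega), p.2, cast_choose_n2_1 n hn]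
    simp [hx]; ring
  · have hc : (insert x p.1).card = 3 := by rw [Finset.card_insert_of_notMem hx, p.2]
    rw [card_supersets n _ (by omega), hc]
    simp [hx]

lemma hDE : Dm n * Em n = (2:ℝ) • Cm n := by
  ext A x
  rw [Matrix.mul_apply]
  simp only [Dm, Em, Cm, of_apply, indicator_mul, Matrix.smul_apply, smul_eq_mul]
  rw [sum_P_boole n (fun s => s ⊆ A.1 ∧ x ∈ s)]
  by_cases hx : x ∈ A.1
  · have key : ((univ : Finset (Finset (Fin n))).filter fun s => s.card = 2 ∧ s ⊆ A.1 ∧ x ∈ s).card = 2 := by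
      have hsplit := Finset.card_filter_add_card_filter_not
        (s := (univ : Finset (Finset (Fin n))).filter fun s => s.card = 2 ∧ s ⊆ A.1)
        (fun s => x ∈ s)
      rw [Finset.filter_filter, Finset.filter_filter] at hsplit
      have h1 : ((univ : Finset (Finset (Fin n))).filter fun s => s.card = 2 ∧ s ⊆ A.1).card = 3 := by
        rw [card_pairs_subset, A.2]; rfl
      have h2 : ((univ : Finset (Finset (Fin n))).filter fun s => (s.card = 2 ∧ s ⊆ A.1) ∧ ¬ x ∈ s).card = 1 := by
        rw [Finset.filter_congr (fun s _ => show ((s.card = 2 ∧ s ⊆ A.1) ∧ ¬ x ∈ s) ↔ (s.card = 2 ∧ s ⊆ A.1.erase x) by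
          rw [Finset.subset_erase]; tauto)]
        rw [card_pairs_subset, Finset.card_erase_of_mem hx, A.2]; rfl
      have heq : ((univ : Finset (Finset (Fin n))).filter fun s => (s.card = 2 ∧ s ⊆ A.1) ∧ x ∈ s).card
          = ((univ : Finset (Finset (Fin n))).filter fun s => s.card = 2 ∧ s ⊆ A.1 ∧ x ∈ s).card := by
        congr 1
        exact Finset.filter_congr (fun s _ => by tauto)
      omega
    rw [key]
    simp [hx]
  · have key : ((univ : Finset (Finset (Fin n))).filter fun s => s.card = 2 ∧ s ⊆ A.1 ∧ x ∈ s) = ∅ := by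
      rw [Finset.filter_eq_empty_iff]
      rintro s - ⟨-, hsub, hxs⟩
      exact hx (hsub hxs)
    rw [key]
    simp [hx]


variable {β : Type*} [Fintype β]
set_option linter.unusedSectionVars false

lemma rowC (A : Vtx n) : ∑ x : Fin n, (if x ∈ A.1 then (1:ℝ) else 0) = 3 := by
  rw [Finset.sum_boole, show univ.filter (fun x => x ∈ A.1) = A.1 by ext x; simp, A.2]
  norm_num

lemma rowD (A : Vtx n) : ∑ p : Pr n, (if p.1 ⊆ A.1 then (1:ℝ) else 0) = 3 := by
  rw [sum_P_boole n (fun s => s ⊆ A.1), card_pairs_subset, A.2]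
  norm_num

lemma colC (hn : 7 ≤ n) (x : Fin n) :
    ∑ A : Vtx n, (if x ∈ A.1 then (1:ℝ) else 0) = ((n:ℝ)-1)*((n:ℝ)-2)/2 := by
  rw [show (∑ A : Vtx n, if x ∈ A.1 then (1:ℝ) else 0)
      = ∑ A : Vtx n, if ({x} : Finset (Fin n)) ⊆ A.1 then (1:ℝ) else 0 by
    refine Finset.sum_congr rfl fun A _ => ?_
    rw [if_congr (Finset.singleton_subset_iff).symm rfl rfl]]
  rw [sum_V_boole n (fun s => ({x} : Finset (Fin n)) ⊆ s),
    card_supersets n _ (by simp), Finset.card_singleton]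
  exact cast_choose_n1_2 n hn

lemma colD (hn : 7 ≤ n) (p : Pr n) :
    ∑ A : Vtx n, (if p.1 ⊆ A.1 then (1:ℝ) else 0) = (n:ℝ)-2 := by
  rw [sum_V_boole n (fun s => p.1 ⊆ s), card_supersets n _ (by rw [p.2]; omega), p.2]
  exact cast_choose_n2_1 n hn

lemma C_mul_J : Cm n * Jm (Fin n) β = (3:ℝ) • Jm (Vtx n) β := by
  ext A b
  rw [Matrix.mul_apply]
  simp only [Cm, Jm, of_apply, mul_one, Matrix.smul_apply, smul_eq_mul]
  rw [rowC n A]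

lemma J_mul_Ct : Jm β (Fin n) * (Cm n)ᵀ = (3:ℝ) • Jm β (Vtx n) := by
  ext b A
  rw [Matrix.mul_apply]
  simp only [Cm, Jm, of_apply, one_mul, transpose_apply, Matrix.smul_apply, smul_eq_mul]
  rw [rowC n A]; norm_num

lemma D_mul_J : Dm n * Jm (Pr n) β = (3:ℝ) • Jm (Vtx n) β := by
  ext A b
  rw [Matrix.mul_apply]
  simp only [Dm, Jm, of_apply, mul_one, Matrix.smul_apply, smul_eq_mul]
  rw [rowD n A]

lemma J_mul_Dt : Jm β (Pr n) * (Dm n)ᵀ = (3:ℝ) • Jm β (Vtx n) := by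
  ext b A
  rw [Matrix.mul_apply]
  simp only [Dm, Jm, of_apply, one_mul, transpose_apply, Matrix.smul_apply, smul_eq_mul]
  rw [rowD n A]; norm_num

lemma Ct_mul_J (hn : 7 ≤ n) :
    (Cm n)ᵀ * Jm (Vtx n) β = (((n:ℝ)-1)*((n:ℝ)-2)/2) • Jm (Fin n) β := by
  ext x b
  rw [Matrix.mul_apply]
  simp only [Cm, Jm, of_apply, mul_one, transpose_apply, Matrix.smul_apply, smul_eq_mul]
  rw [colC n hn x]

lemma Dt_mul_J (hn : 7 ≤ n) :
    (Dm n)ᵀ * Jm (Vtx n) β = ((n:ℝ)-2) • Jm (Pr n) β := by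
  ext p b
  rw [Matrix.mul_apply]
  simp only [Dm, Jm, of_apply, mul_one, transpose_apply, Matrix.smul_apply, smul_eq_mul]
  rw [colD n hn p]


lemma Jm_transpose (α γ : Type*) : (Jm α γ)ᵀ = Jm γ α := rfl

noncomputable def Xm : Matrix (Vtx n) (Vtx n) ℝ := Cm n * (Cm n)ᵀ
noncomputable def Ym : Matrix (Vtx n) (Vtx n) ℝ := Dm n * (Dm n)ᵀ

lemma hEtDt : (Em n)ᵀ * (Dm n)ᵀ = (2:ℝ) • (Cm n)ᵀ := by
  rw [← Matrix.transpose_mul, hDE, Matrix.transpose_smul]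

lemma hXX (hn : 7 ≤ n) : Xm n * Xm n
    = (9*((n:ℝ)-2)) • Jm (Vtx n) (Vtx n) + (((n:ℝ)-2)*((n:ℝ)-3)/2) • Xm n := by
  unfold Xm
  rw [Matrix.mul_assoc, ← Matrix.mul_assoc ((Cm n)ᵀ), hCtC n hn, Matrix.add_mul,
    Matrix.smul_mul, Matrix.smul_mul, Matrix.one_mul, J_mul_Ct, Matrix.mul_add,
    Matrix.mul_smul, Matrix.mul_smul, Matrix.mul_smul, C_mul_J]
  module

lemma hYY (hn : 7 ≤ n) : Ym n * Ym n = (4:ℝ) • Xm n + ((n:ℝ)-4) • Ym n := by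
  unfold Xm Ym
  rw [Matrix.mul_assoc, ← Matrix.mul_assoc ((Dm n)ᵀ), hDtD n hn, Matrix.add_mul,
    Matrix.smul_mul, Matrix.one_mul, Matrix.mul_add, Matrix.mul_smul,
    Matrix.mul_assoc (Em n), hEtDt, ← Matrix.mul_assoc, hDE, Matrix.smul_mul,
    Matrix.mul_smul]
  module

lemma hXY (hn : 7 ≤ n) : Xm n * Ym n
    = (9:ℝ) • Jm (Vtx n) (Vtx n) + (2*((n:ℝ)-3)) • Xm n := by
  unfold Xm Ym
  rw [Matrix.mul_assoc, ← Matrix.mul_assoc ((Cm n)ᵀ), hCtD n hn, Matrix.add_mul,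
    Matrix.smul_mul, J_mul_Dt, hEtDt, Matrix.mul_add, Matrix.mul_smul, Matrix.mul_smul,
    Matrix.mul_smul, C_mul_J]
  module

lemma hYX (hn : 7 ≤ n) : Ym n * Xm n
    = (9:ℝ) • Jm (Vtx n) (Vtx n) + (2*((n:ℝ)-3)) • Xm n := by
  unfold Xm Ym
  have hDtC : (Dm n)ᵀ * Cm n = Jm (Pr n) (Fin n) + ((n:ℝ)-3) • Em n := by
    have := congrArg Matrix.transpose (hCtD n hn)
    rwa [Matrix.transpose_mul, Matrix.transpose_transpose, Matrix.transpose_add,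
      Matrix.transpose_smul, Matrix.transpose_transpose, Jm_transpose] at this
  rw [← Matrix.mul_assoc, Matrix.mul_assoc (Dm n) ((Dm n)ᵀ) (Cm n), hDtC,
    Matrix.mul_add, D_mul_J, Matrix.mul_smul, hDE, Matrix.add_mul, Matrix.smul_mul,
    J_mul_Ct, Matrix.smul_mul, Matrix.smul_mul]
  module

lemma hXJ (hn : 7 ≤ n) : Xm n * Jm (Vtx n) (Vtx n)
    = (3*((n:ℝ)-1)*((n:ℝ)-2)/2) • Jm (Vtx n) (Vtx n) := by
  unfold Xm
  rw [Matrix.mul_assoc, Ct_mul_J n hn, Matrix.mul_smul, C_mul_J]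
  module

lemma hYJ (hn : 7 ≤ n) : Ym n * Jm (Vtx n) (Vtx n)
    = (3*((n:ℝ)-2)) • Jm (Vtx n) (Vtx n) := by
  unfold Ym
  rw [Matrix.mul_assoc, Dt_mul_J n hn, Matrix.mul_smul, D_mul_J]
  module

lemma DDt_apply (A B : Vtx n) :
    (Dm n * (Dm n)ᵀ) A B = (((A.1 ∩ B.1).card.choose 2 : ℕ) : ℝ) := by
  rw [Matrix.mul_apply]
  simp only [Dm, transpose_apply, of_apply, indicator_mul]
  rw [show (∑ p : Pr n, if p.1 ⊆ A.1 ∧ p.1 ⊆ B.1 then (1:ℝ) else 0)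
      = ∑ p : Pr n, if p.1 ⊆ A.1 ∩ B.1 then (1:ℝ) else 0 by
    refine Finset.sum_congr rfl fun p _ => ?_
    rw [if_congr (Finset.subset_inter_iff).symm rfl rfl]]
  rw [sum_P_boole n (fun s => s ⊆ A.1 ∩ B.1), card_pairs_subset n (A.1 ∩ B.1)]


lemma hAdj (hn : 7 ≤ n) :
    (johnsonGraph n 3 {1}).adjMatrix ℝ = Xm n - (2:ℝ) • Ym n + (3:ℝ) • 1 := by
  ext A B
  simp only [SimpleGraph.adjMatrix_apply, Matrix.add_apply, Matrix.sub_apply,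
    Matrix.smul_apply, Matrix.one_apply, smul_eq_mul]
  unfold Xm Ym
  rw [CCt_apply, DDt_apply]
  by_cases h : A = B
  · subst h
    rw [Finset.inter_self, A.2]
    simp [johnsonGraph]
    norm_num
  · have hne : A.1 ≠ B.1 := fun hh => h (Subtype.ext hh)
    have hle : (A.1 ∩ B.1).card ≤ 2 := by
      by_contra hc
      push_neg at hc
      have h3 : (A.1 ∩ B.1).card ≤ 3 :=
        le_trans (Finset.card_le_card Finset.inter_subset_left) (le_of_eq A.2)
      have h33 : (A.1 ∩ B.1).card = 3 := by omega
      have : A.1 ∩ B.1 = A.1 := Finset.eq_of_subset_of_card_le Finset.inter_subset_left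
        (by rw [h33, A.2])
      have hsub : A.1 ⊆ B.1 := by rw [← this]; exact Finset.inter_subset_right
      exact hne (Finset.eq_of_subset_of_card_le hsub (by rw [A.2, B.2]))
    have hadj : (johnsonGraph n 3 {1}).Adj A B ↔ (A.1 ∩ B.1).card = 1 := by
      simp [johnsonGraph, h]
    interval_cases hc : (A.1 ∩ B.1).card
    · simp [hadj, h]
    · simp [hadj, h]
    · simp [hadj, h]

lemma prodZero (hn : 7 ≤ n) :
    ((johnsonGraph n 3 {1}).adjMatrix ℝ - (3*((n:ℝ)-3)*((n:ℝ)-4)/2) • 1) *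
      (((johnsonGraph n 3 {1}).adjMatrix ℝ - (((n:ℝ)-4)*((n:ℝ)-9)/2) • 1) *
        (((johnsonGraph n 3 {1}).adjMatrix ℝ - (3:ℝ) • 1) *
          ((johnsonGraph n 3 {1}).adjMatrix ℝ - (-2*(n:ℝ)+11) • 1))) = 0 := by
  rw [hAdj n hn]
  have h1 : (Xm n - (2:ℝ) • Ym n + (3:ℝ) • 1 - (3:ℝ) • 1) *
      (Xm n - (2:ℝ) • Ym n + (3:ℝ) • 1 - (-2*(n:ℝ)+11) • 1)
      = (9*((n:ℝ)-6)) • Jm (Vtx n) (Vtx n) + (((n:ℝ)-7)*((n:ℝ)-10)/2) • Xm n := by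
    have l : Xm n - (2:ℝ) • Ym n + (3:ℝ) • 1 - (3:ℝ) • 1
        = Xm n + (-2:ℝ) • Ym n := by module
    have r : Xm n - (2:ℝ) • Ym n + (3:ℝ) • 1 - (-2*(n:ℝ)+11) • 1
        = Xm n + (-2:ℝ) • Ym n + (2*(n:ℝ)-8) • 1 := by module
    rw [l, r]
    simp only [Matrix.add_mul, Matrix.mul_add, Matrix.smul_mul, Matrix.mul_smul,
      Matrix.mul_one]
    rw [hXX n hn, hXY n hn, hYX n hn, hYY n hn]
    module
  have h2 : (Xm n - (2:ℝ) • Ym n + (3:ℝ) • 1 - (((n:ℝ)-4)*((n:ℝ)-9)/2) • 1) *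
      ((9*((n:ℝ)-6)) • Jm (Vtx n) (Vtx n) + (((n:ℝ)-7)*((n:ℝ)-10)/2) • Xm n)
      = (9*((n:ℝ)-4)*((n:ℝ)-5)*(3*(n:ℝ)-14)/2) • Jm (Vtx n) (Vtx n) := by
    have l : Xm n - (2:ℝ) • Ym n + (3:ℝ) • 1 - (((n:ℝ)-4)*((n:ℝ)-9)/2) • 1
        = Xm n + (-2:ℝ) • Ym n + (3-((n:ℝ)-4)*((n:ℝ)-9)/2) • 1 := by module
    rw [l]
    simp only [Matrix.add_mul, Matrix.mul_add, Matrix.smul_mul, Matrix.mul_smul,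
      Matrix.one_mul]
    rw [hXJ n hn, hYJ n hn, hXX n hn, hYX n hn]
    module
  have h3 : (Xm n - (2:ℝ) • Ym n + (3:ℝ) • 1 - (3*((n:ℝ)-3)*((n:ℝ)-4)/2) • 1) *
      ((9*((n:ℝ)-4)*((n:ℝ)-5)*(3*(n:ℝ)-14)/2) • Jm (Vtx n) (Vtx n)) = 0 := by
    have l : Xm n - (2:ℝ) • Ym n + (3:ℝ) • 1 - (3*((n:ℝ)-3)*((n:ℝ)-4)/2) • 1
        = Xm n + (-2:ℝ) • Ym n + (3-3*((n:ℝ)-3)*((n:ℝ)-4)/2) • 1 := by module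
    rw [l]
    simp only [Matrix.add_mul, Matrix.mul_smul, Matrix.smul_mul, Matrix.one_mul]
    rw [hXJ n hn, hYJ n hn]
    module
  rw [h1, h2, h3]


lemma mem_spectrum_iff (M : Matrix (Vtx n) (Vtx n) ℝ) (μ : ℝ) :
    μ ∈ spectrum ℝ M ↔ ∃ v : Vtx n → ℝ, v ≠ 0 ∧ M.mulVec v = μ • v := by
  rw [← AlgEquiv.spectrum_eq (Matrix.toLinAlgEquiv' (n := Vtx n) (R := ℝ)) M,
    ← Module.End.hasEigenvalue_iff_mem_spectrum]
  constructor
  · intro h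
    obtain ⟨v, hv⟩ := h.exists_hasEigenvector
    refine ⟨v, hv.2, ?_⟩
    have := hv.apply_eq_smul
    rwa [Matrix.toLinAlgEquiv'_apply] at this
  · rintro ⟨v, hv0, hv⟩
    apply Module.End.hasEigenvalue_of_hasEigenvector (x := v)
    refine ⟨?_, hv0⟩
    rw [Module.End.mem_eigenspace_iff, Matrix.toLinAlgEquiv'_apply, hv]

-- vector helpers
lemma Ct_mulVec_apply (v : Vtx n → ℝ) (x : Fin n) :
    ((Cm n)ᵀ.mulVec v) x = ∑ A : Vtx n, (if x ∈ A.1 then (1:ℝ) else 0) * v A := by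
  simp [Matrix.mulVec, dotProduct, Cm, transpose_apply]

lemma Dt_mulVec_apply (v : Vtx n → ℝ) (p : Pr n) :
    ((Dm n)ᵀ.mulVec v) p = ∑ A : Vtx n, (if p.1 ⊆ A.1 then (1:ℝ) else 0) * v A := by
  simp [Matrix.mulVec, dotProduct, Dm, transpose_apply]

lemma C_mulVec_const (c : ℝ) :
    (Cm n).mulVec (fun _ => c) = fun _ => 3*c := by
  funext A
  simp only [Matrix.mulVec, dotProduct, Cm, of_apply]
  rw [show (∑ x : Fin n, (if x ∈ A.1 then (1:ℝ) else 0) * c)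
      = (∑ x : Fin n, (if x ∈ A.1 then (1:ℝ) else 0)) * c from (Finset.sum_mul ..).symm,
    rowC n A]

lemma D_mulVec_const (c : ℝ) :
    (Dm n).mulVec (fun _ => c) = fun _ => 3*c := by
  funext A
  simp only [Matrix.mulVec, dotProduct, Dm, of_apply]
  rw [show (∑ p : Pr n, (if p.1 ⊆ A.1 then (1:ℝ) else 0) * c)
      = (∑ p : Pr n, (if p.1 ⊆ A.1 then (1:ℝ) else 0)) * c from (Finset.sum_mul ..).symm,
    rowD n A]

lemma Ct_mulVec_const (hn : 7 ≤ n) (c : ℝ) :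
    (Cm n)ᵀ.mulVec (fun _ => c) = fun _ => (((n:ℝ)-1)*((n:ℝ)-2)/2)*c := by
  funext x
  rw [Ct_mulVec_apply]
  rw [show (∑ A : Vtx n, (if x ∈ A.1 then (1:ℝ) else 0) * c)
      = (∑ A : Vtx n, (if x ∈ A.1 then (1:ℝ) else 0)) * c from (Finset.sum_mul ..).symm,
    colC n hn x]

lemma Dt_mulVec_const (hn : 7 ≤ n) (c : ℝ) :
    (Dm n)ᵀ.mulVec (fun _ => c) = fun _ => ((n:ℝ)-2)*c := by
  funext p
  rw [Dt_mulVec_apply]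
  rw [show (∑ A : Vtx n, (if p.1 ⊆ A.1 then (1:ℝ) else 0) * c)
      = (∑ A : Vtx n, (if p.1 ⊆ A.1 then (1:ℝ) else 0)) * c from (Finset.sum_mul ..).symm,
    colD n hn p]

-- eigenvalue θ₀ on all-ones
lemma eig0 (hn : 7 ≤ n) :
    ((johnsonGraph n 3 {1}).adjMatrix ℝ).mulVec (fun _ => (1:ℝ))
      = (3*((n:ℝ)-3)*((n:ℝ)-4)/2) • (fun _ => (1:ℝ)) := by
  rw [hAdj n hn]
  rw [Matrix.add_mulVec, Matrix.sub_mulVec, Matrix.smul_mulVec,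
    Matrix.smul_mulVec, Matrix.one_mulVec]
  unfold Xm Ym
  rw [← Matrix.mulVec_mulVec, ← Matrix.mulVec_mulVec, Ct_mulVec_const n hn,
    Dt_mulVec_const n hn, C_mulVec_const, D_mulVec_const]
  funext A
  simp only [Pi.smul_apply, Pi.add_apply, Pi.sub_apply, smul_eq_mul]
  push_cast
  ring


lemma sum_point (a : Fin n) (f : Fin n → ℝ) :
    ∑ x : Fin n, f x * (if x = a then 1 else 0) = f a := by
  rw [Finset.sum_eq_single_of_mem a (Finset.mem_univ a)]
  · simp
  · intro b _ hb; simp [hb]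

lemma sum_P_point (s : Finset (Fin n)) (hs : s.card = 2) (f : Finset (Fin n) → ℝ) :
    ∑ p : Pr n, f p.1 * (if p.1 = s then 1 else 0) = f s := by
  rw [Finset.sum_eq_single_of_mem (⟨s, hs⟩ : Pr n) (Finset.mem_univ _)]
  · simp
  · intro p _ hp
    have : p.1 ≠ s := fun h => hp (Subtype.ext h)
    simp [this]

-- eigenvalue θ₁
lemma eig1 (hn : 7 ≤ n) :
    ∃ v : Vtx n → ℝ, v ≠ 0 ∧
      ((johnsonGraph n 3 {1}).adjMatrix ℝ).mulVec v = (((n:ℝ)-4)*((n:ℝ)-9)/2) • v := by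
  have h0 : (0:ℕ) < n := by omega
  have h1 : (1:ℕ) < n := by omega
  set x0 : Fin n := ⟨0, h0⟩
  set x1 : Fin n := ⟨1, h1⟩
  set w : Fin n → ℝ := fun x => (if x = x0 then 1 else 0) - (if x = x1 then 1 else 0) with hw
  have hsumw : ∑ x : Fin n, w x = 0 := by
    rw [hw]
    rw [Finset.sum_sub_distrib]
    rw [show (∑ x : Fin n, (if x = x0 then (1:ℝ) else 0)) = 1 by
      have := sum_point n x0 (fun _ => (1:ℝ)); simpa using this]
    rw [show (∑ x : Fin n, (if x = x1 then (1:ℝ) else 0)) = 1 by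
      have := sum_point n x1 (fun _ => (1:ℝ)); simpa using this]
    ring
  have hJw : ∀ (α : Type) [Fintype α], (Jm α (Fin n)).mulVec w = 0 := by
    intro α _
    funext a
    simp only [Matrix.mulVec, dotProduct, Jm, of_apply, one_mul, Pi.zero_apply]
    exact hsumw
  set v : Vtx n → ℝ := (Cm n).mulVec w with hv
  refine ⟨v, ?_, ?_⟩
  · -- nonzero at {x0, x2, x3}
    have h2 : (2:ℕ) < n := by omega
    have h3 : (3:ℕ) < n := by omega
    set x2 : Fin n := ⟨2, h2⟩
    set x3 : Fin n := ⟨3, h3⟩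
    have hcard : ({x0, x2, x3} : Finset (Fin n)).card = 3 := by
      rw [Finset.card_insert_of_notMem (by simp [x0, x2, x3, Fin.ext_iff]),
        Finset.card_insert_of_notMem (by simp [x2, x3, Fin.ext_iff]),
        Finset.card_singleton]
    intro hzero
    have := congrFun hzero ⟨{x0, x2, x3}, hcard⟩
    rw [hv] at this
    simp only [Matrix.mulVec, dotProduct, Cm, of_apply, Pi.zero_apply] at this
    rw [hw] at this
    simp only [mul_sub] at this
    rw [Finset.sum_sub_distrib, sum_point n x0 (fun x => if x ∈ ({x0, x2, x3} : Finset (Fin n)) then (1:ℝ) else 0),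
      sum_point n x1 (fun x => if x ∈ ({x0, x2, x3} : Finset (Fin n)) then (1:ℝ) else 0)] at this
    have hx0mem : x0 ∈ ({x0, x2, x3} : Finset (Fin n)) := by simp
    have hx1mem : x1 ∉ ({x0, x2, x3} : Finset (Fin n)) := by
      simp [x0, x1, x2, x3, Fin.ext_iff]
    rw [if_pos hx0mem, if_neg hx1mem] at this
    norm_num at this
  · rw [hAdj n hn]
    rw [Matrix.add_mulVec, Matrix.sub_mulVec, Matrix.smul_mulVec,
      Matrix.smul_mulVec, Matrix.one_mulVec]
    have hXv : (Xm n).mulVec v = ((((n:ℝ)-2)*((n:ℝ)-3))/2) • v := by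
      rw [hv]
      unfold Xm
      rw [Matrix.mulVec_mulVec, Matrix.mul_assoc, hCtC n hn, Matrix.mul_add,
        Matrix.mul_smul, Matrix.mul_smul, Matrix.mul_one, Matrix.add_mulVec,
        Matrix.smul_mulVec, Matrix.smul_mulVec, ← Matrix.mulVec_mulVec, hJw,
        Matrix.mulVec_zero, smul_zero, zero_add]
    have hYv : (Ym n).mulVec v = (2*((n:ℝ)-3)) • v := by
      rw [hv]
      unfold Ym
      have hDtC : (Dm n)ᵀ * Cm n = Jm (Pr n) (Fin n) + ((n:ℝ)-3) • Em n := by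
        have := congrArg Matrix.transpose (hCtD n hn)
        rwa [Matrix.transpose_mul, Matrix.transpose_transpose, Matrix.transpose_add,
          Matrix.transpose_smul, Matrix.transpose_transpose, Jm_transpose] at this
      rw [Matrix.mulVec_mulVec, Matrix.mul_assoc, hDtC, Matrix.mul_add, Matrix.mul_smul,
        hDE, Matrix.add_mulVec, ← Matrix.mulVec_mulVec, hJw, Matrix.mulVec_zero, zero_add, smul_smul,
        Matrix.smul_mulVec, show ((n:ℝ)-3)*2 = 2*((n:ℝ)-3) from by ring]
    rw [hXv, hYv]
    funext A
    simp only [Pi.add_apply, Pi.sub_apply, Pi.smul_apply, smul_eq_mul]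
    ring

-- eigenvalue θ₂
lemma eig2 (hn : 7 ≤ n) :
    ∃ v : Vtx n → ℝ, v ≠ 0 ∧
      ((johnsonGraph n 3 {1}).adjMatrix ℝ).mulVec v = (-2*(n:ℝ)+11) • v := by
  have h0 : (0:ℕ) < n := by omega
  have h1 : (1:ℕ) < n := by omega
  have h2 : (2:ℕ) < n := by omega
  have h3 : (3:ℕ) < n := by omega
  have h6 : (6:ℕ) < n := by omega
  set x0 : Fin n := ⟨0, h0⟩
  set x1 : Fin n := ⟨1, h1⟩
  set x2 : Fin n := ⟨2, h2⟩
  set x3 : Fin n := ⟨3, h3⟩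
  set x6 : Fin n := ⟨6, h6⟩
  have c01 : ({x0,x1} : Finset (Fin n)).card = 2 := by
    rw [Finset.card_insert_of_notMem (by simp [x0, x1, Fin.ext_iff]), Finset.card_singleton]
  have c23 : ({x2,x3} : Finset (Fin n)).card = 2 := by
    rw [Finset.card_insert_of_notMem (by simp [x2, x3, Fin.ext_iff]), Finset.card_singleton]
  have c02 : ({x0,x2} : Finset (Fin n)).card = 2 := by
    rw [Finset.card_insert_of_notMem (by simp [x0, x2, Fin.ext_iff]), Finset.card_singleton]
  have c13 : ({x1,x3} : Finset (Fin n)).card = 2 := by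
    rw [Finset.card_insert_of_notMem (by simp [x1, x3, Fin.ext_iff]), Finset.card_singleton]
  set u : Pr n → ℝ := fun p => (if p.1 = {x0,x1} then 1 else 0) + (if p.1 = {x2,x3} then 1 else 0)
    - (if p.1 = {x0,x2} then 1 else 0) - (if p.1 = {x1,x3} then 1 else 0) with hu
  have key : ∀ f : Finset (Fin n) → ℝ,
      ∑ p : Pr n, f p.1 * u p = f {x0,x1} + f {x2,x3} - f {x0,x2} - f {x1,x3} := by
    intro f
    rw [hu]
    simp only [mul_add, mul_sub]
    rw [Finset.sum_sub_distrib, Finset.sum_sub_distrib, Finset.sum_add_distrib,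
      sum_P_point n _ c01 f, sum_P_point n _ c23 f, sum_P_point n _ c02 f,
      sum_P_point n _ c13 f]
  have hsumu : ∀ (α : Type) [Fintype α], (Jm α (Pr n)).mulVec u = 0 := by
    intro α _
    funext a
    simp only [Matrix.mulVec, dotProduct, Jm, of_apply, one_mul, Pi.zero_apply]
    have := key (fun _ => (1:ℝ))
    simpa using this
  have hEtu : (Em n)ᵀ.mulVec u = 0 := by
    funext x
    simp only [Matrix.mulVec, dotProduct, Em, transpose_apply, of_apply, Pi.zero_apply]
    rw [key (fun s => if x ∈ s then (1:ℝ) else 0)]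
    by_cases e0 : x = x0
    · subst e0; simp [x0, x1, x2, x3, Fin.ext_iff]
    · by_cases e1 : x = x1
      · subst e1; simp [x0, x1, x2, x3, Fin.ext_iff]
      · by_cases e2 : x = x2
        · subst e2; simp [x0, x1, x2, x3, Fin.ext_iff]
        · by_cases e3 : x = x3
          · subst e3; simp [x0, x1, x2, x3, Fin.ext_iff]
          · simp [Finset.mem_insert, Finset.mem_singleton, e0, e1, e2, e3]
  set v : Vtx n → ℝ := (Dm n).mulVec u with hv
  refine ⟨v, ?_, ?_⟩
  · intro hzero
    have hcard : ({x0, x1, x6} : Finset (Fin n)).card = 3 := by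
      rw [Finset.card_insert_of_notMem (by simp [x0, x1, x6, Fin.ext_iff]),
        Finset.card_insert_of_notMem (by simp [x1, x6, Fin.ext_iff]),
        Finset.card_singleton]
    have := congrFun hzero ⟨{x0, x1, x6}, hcard⟩
    rw [hv] at this
    simp only [Matrix.mulVec, dotProduct, Dm, of_apply, Pi.zero_apply] at this
    rw [show (∑ p : Pr n, (if p.1 ⊆ ({x0,x1,x6} : Finset (Fin n)) then (1:ℝ) else 0) * u p)
        = ∑ p : Pr n, (fun s => if s ⊆ ({x0,x1,x6} : Finset (Fin n)) then (1:ℝ) else 0) p.1 * u p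
        from rfl, key (fun s => if s ⊆ ({x0,x1,x6} : Finset (Fin n)) then (1:ℝ) else 0)] at this
    rw [if_pos (by intro y hy; simp at hy; rcases hy with h|h <;> simp [h])] at this
    rw [if_neg (fun hsub => by
      have := hsub (Finset.mem_insert_self x2 {x3})
      simp [x0, x1, x2, x6, Fin.ext_iff] at this)] at this
    rw [if_neg (fun hsub => by
      have := hsub (Finset.mem_insert_of_mem (Finset.mem_singleton_self x2))
      simp [x0, x1, x2, x6, Fin.ext_iff] at this)] at this
    rw [if_neg (fun hsub => by
      have := hsub (Finset.mem_insert_of_mem (Finset.mem_singleton_self x3))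
      simp [x0, x1, x3, x6, Fin.ext_iff] at this)] at this
    norm_num at this
  · rw [hAdj n hn]
    rw [Matrix.add_mulVec, Matrix.sub_mulVec, Matrix.smul_mulVec,
      Matrix.smul_mulVec, Matrix.one_mulVec]
    have hXv : (Xm n).mulVec v = 0 := by
      rw [hv]
      unfold Xm
      rw [Matrix.mulVec_mulVec, Matrix.mul_assoc, hCtD n hn, Matrix.mul_add,
        Matrix.mul_smul, Matrix.add_mulVec, Matrix.smul_mulVec,
        ← Matrix.mulVec_mulVec, hsumu, Matrix.mulVec_zero, ← Matrix.mulVec_mulVec, hEtu,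
        Matrix.mulVec_zero, smul_zero, add_zero]
    have hYv : (Ym n).mulVec v = ((n:ℝ)-4) • v := by
      rw [hv]
      unfold Ym
      rw [Matrix.mulVec_mulVec, Matrix.mul_assoc, hDtD n hn, Matrix.mul_add,
        Matrix.mul_smul, Matrix.mul_one, Matrix.add_mulVec, Matrix.smul_mulVec,
        ← Matrix.mulVec_mulVec, ← Matrix.mulVec_mulVec, hEtu,
        Matrix.mulVec_zero, Matrix.mulVec_zero, add_zero]
    rw [hXv, hYv]
    funext A
    simp only [Pi.add_apply, Pi.sub_apply, Pi.smul_apply, Pi.zero_apply, smul_eq_mul]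
    ring


def emap (sg : Equiv.Perm (Fin n)) : Vtx n ≃ Vtx n where
  toFun A := ⟨A.1.image sg, by rw [Finset.card_image_of_injective _ sg.injective, A.2]⟩
  invFun A := ⟨A.1.image sg.symm, by rw [Finset.card_image_of_injective _ sg.symm.injective, A.2]⟩
  left_inv A := Subtype.ext (by simp [Finset.image_image])
  right_inv A := Subtype.ext (by simp [Finset.image_image])

lemma sum_cancel (sg : Equiv.Perm (Fin n)) (v : Vtx n → ℝ) (f : Finset (Fin n) → ℝ)
    (hv : ∀ A : Vtx n, v (emap n sg A) = - v A)
    (hf : ∀ A : Vtx n, f (emap n sg A).1 = f A.1) :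
    ∑ A : Vtx n, f A.1 * v A = 0 := by
  have h := Equiv.sum_comp (emap n sg) (fun A : Vtx n => f A.1 * v A)
  have h2 : ∑ A : Vtx n, f A.1 * v A = - ∑ A : Vtx n, f A.1 * v A := by
    conv_lhs => rw [← h]
    rw [← Finset.sum_neg_distrib]
    refine Finset.sum_congr rfl fun A _ => ?_
    simp only [hv A, hf A]
    ring
  linarith

def gp (a b : Fin n) : Fin n → ℝ := fun y => (if y = a then 1 else 0) - (if y = b then 1 else 0)

lemma gswap_self (a b : Fin n) (hab : a ≠ b) (y : Fin n) :
    gp n a b (Equiv.swap a b y) = - gp n a b y := by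
  rcases eq_or_ne y a with rfl | ha
  · rw [Equiv.swap_apply_left]; simp [gp, hab, hab.symm]
  rcases eq_or_ne y b with rfl | hb
  · rw [Equiv.swap_apply_right]; simp [gp, hab, hab.symm]
  · rw [Equiv.swap_apply_of_ne_of_ne ha hb]; simp [gp, ha, hb]

lemma gswap_other (a b c d : Fin n) (hca : c ≠ a) (hcb : c ≠ b) (hda : d ≠ a) (hdb : d ≠ b)
    (y : Fin n) : gp n c d (Equiv.swap a b y) = gp n c d y := by
  rcases eq_or_ne y a with rfl | ha
  · rw [Equiv.swap_apply_left]; simp [gp, hca.symm, hcb.symm, hda.symm, hdb.symm]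
  rcases eq_or_ne y b with rfl | hb
  · rw [Equiv.swap_apply_right]; simp [gp, hca.symm, hcb.symm, hda.symm, hdb.symm]
  · rw [Equiv.swap_apply_of_ne_of_ne ha hb]

lemma sum_emap (sg : Equiv.Perm (Fin n)) (A : Vtx n) (g : Fin n → ℝ) :
    (∑ y ∈ (emap n sg A).1, g y) = ∑ y ∈ A.1, g (sg y) := by
  show (∑ y ∈ A.1.image sg, g y) = _
  exact Finset.sum_image (fun x _ y _ h => sg.injective h)

lemma mem_image_swap (a b x : Fin n) (hxa : x ≠ a) (hxb : x ≠ b) (s : Finset (Fin n)) :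
    x ∈ s.image (Equiv.swap a b) ↔ x ∈ s := by
  have hfix : Equiv.swap a b x = x := Equiv.swap_apply_of_ne_of_ne hxa hxb
  rw [Finset.mem_image]
  constructor
  · rintro ⟨y, hy, hyx⟩
    have : y = x := by
      have h2 := congrArg (Equiv.swap a b) hyx
      rwa [Equiv.swap_apply_self, hfix] at h2
    exact this ▸ hy
  · intro hx; exact ⟨x, hx, hfix⟩

lemma subset_image_swap (a b : Fin n) (p : Finset (Fin n)) (hpa : a ∉ p) (hpb : b ∉ p)
    (s : Finset (Fin n)) : p ⊆ s.image (Equiv.swap a b) ↔ p ⊆ s := by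
  constructor <;> intro h y hy
  · have hya : y ≠ a := fun e => hpa (e ▸ hy)
    have hyb : y ≠ b := fun e => hpb (e ▸ hy)
    exact (mem_image_swap n a b y hya hyb s).mp (h hy)
  · have hya : y ≠ a := fun e => hpa (e ▸ hy)
    have hyb : y ≠ b := fun e => hpb (e ▸ hy)
    exact (mem_image_swap n a b y hya hyb s).mpr (h hy)

lemma eig3 (hn : 7 ≤ n) :
    ∃ v : Vtx n → ℝ, v ≠ 0 ∧
      ((johnsonGraph n 3 {1}).adjMatrix ℝ).mulVec v = (3:ℝ) • v := by
  have h0 : (0:ℕ) < n := by omega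
  have h1 : (1:ℕ) < n := by omega
  have h2 : (2:ℕ) < n := by omega
  have h3 : (3:ℕ) < n := by omega
  have h4 : (4:ℕ) < n := by omega
  have h5 : (5:ℕ) < n := by omega
  set x0 : Fin n := ⟨0, h0⟩
  set x1 : Fin n := ⟨1, h1⟩
  set x2 : Fin n := ⟨2, h2⟩
  set x3 : Fin n := ⟨3, h3⟩
  set x4 : Fin n := ⟨4, h4⟩
  set x5 : Fin n := ⟨5, h5⟩
  have dne : ∀ (i j : ℕ) (hi : i < n) (hj : j < n), i ≠ j → (⟨i,hi⟩ : Fin n) ≠ ⟨j,hj⟩ :=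
    fun i j hi hj hij e => hij (by simpa [Fin.ext_iff] using e)
  have d01 : x0 ≠ x1 := dne 0 1 h0 h1 (by omega)
  have d23 : x2 ≠ x3 := dne 2 3 h2 h3 (by omega)
  have d45 : x4 ≠ x5 := dne 4 5 h4 h5 (by omega)
  have d20 : x2 ≠ x0 := dne 2 0 h2 h0 (by omega)
  have d21 : x2 ≠ x1 := dne 2 1 h2 h1 (by omega)
  have d30 : x3 ≠ x0 := dne 3 0 h3 h0 (by omega)
  have d31 : x3 ≠ x1 := dne 3 1 h3 h1 (by omega)
  have d40 : x4 ≠ x0 := dne 4 0 h4 h0 (by omega)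
  have d41 : x4 ≠ x1 := dne 4 1 h4 h1 (by omega)
  have d42 : x4 ≠ x2 := dne 4 2 h4 h2 (by omega)
  have d43 : x4 ≠ x3 := dne 4 3 h4 h3 (by omega)
  have d50 : x5 ≠ x0 := dne 5 0 h5 h0 (by omega)
  have d51 : x5 ≠ x1 := dne 5 1 h5 h1 (by omega)
  have d52 : x5 ≠ x2 := dne 5 2 h5 h2 (by omega)
  have d53 : x5 ≠ x3 := dne 5 3 h5 h3 (by omega)
  set v : Vtx n → ℝ := fun A =>
    (∑ y ∈ A.1, gp n x0 x1 y) * (∑ y ∈ A.1, gp n x2 x3 y) * (∑ y ∈ A.1, gp n x4 x5 y)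
    with hvdef
  -- flip lemmas
  have hflip0 : ∀ A : Vtx n, v (emap n (Equiv.swap x0 x1) A) = - v A := by
    intro A
    rw [hvdef]
    simp only
    rw [sum_emap, sum_emap, sum_emap]
    rw [show (∑ y ∈ A.1, gp n x0 x1 (Equiv.swap x0 x1 y)) = ∑ y ∈ A.1, - gp n x0 x1 y from
      Finset.sum_congr rfl fun y _ => gswap_self n x0 x1 d01 y]
    rw [show (∑ y ∈ A.1, gp n x2 x3 (Equiv.swap x0 x1 y)) = ∑ y ∈ A.1, gp n x2 x3 y from
      Finset.sum_congr rfl fun y _ => gswap_other n x0 x1 x2 x3 d20 d21 d30 d31 y]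
    rw [show (∑ y ∈ A.1, gp n x4 x5 (Equiv.swap x0 x1 y)) = ∑ y ∈ A.1, gp n x4 x5 y from
      Finset.sum_congr rfl fun y _ => gswap_other n x0 x1 x4 x5 d40 d41 d50 d51 y]
    rw [Finset.sum_neg_distrib]
    ring
  have hflip1 : ∀ A : Vtx n, v (emap n (Equiv.swap x2 x3) A) = - v A := by
    intro A
    rw [hvdef]
    simp only
    rw [sum_emap, sum_emap, sum_emap]
    rw [show (∑ y ∈ A.1, gp n x2 x3 (Equiv.swap x2 x3 y)) = ∑ y ∈ A.1, - gp n x2 x3 y from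
      Finset.sum_congr rfl fun y _ => gswap_self n x2 x3 d23 y]
    rw [show (∑ y ∈ A.1, gp n x0 x1 (Equiv.swap x2 x3 y)) = ∑ y ∈ A.1, gp n x0 x1 y from
      Finset.sum_congr rfl fun y _ => gswap_other n x2 x3 x0 x1 d20.symm d30.symm d21.symm d31.symm y]
    rw [show (∑ y ∈ A.1, gp n x4 x5 (Equiv.swap x2 x3 y)) = ∑ y ∈ A.1, gp n x4 x5 y from
      Finset.sum_congr rfl fun y _ => gswap_other n x2 x3 x4 x5 d42 d43 d52 d53 y]
    rw [Finset.sum_neg_distrib]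
    ring
  have hflip2 : ∀ A : Vtx n, v (emap n (Equiv.swap x4 x5) A) = - v A := by
    intro A
    rw [hvdef]
    simp only
    rw [sum_emap, sum_emap, sum_emap]
    rw [show (∑ y ∈ A.1, gp n x4 x5 (Equiv.swap x4 x5 y)) = ∑ y ∈ A.1, - gp n x4 x5 y from
      Finset.sum_congr rfl fun y _ => gswap_self n x4 x5 d45 y]
    rw [show (∑ y ∈ A.1, gp n x0 x1 (Equiv.swap x4 x5 y)) = ∑ y ∈ A.1, gp n x0 x1 y from
      Finset.sum_congr rfl fun y _ => gswap_other n x4 x5 x0 x1 d40.symm d50.symm d41.symm d51.symm y]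
    rw [show (∑ y ∈ A.1, gp n x2 x3 (Equiv.swap x4 x5 y)) = ∑ y ∈ A.1, gp n x2 x3 y from
      Finset.sum_congr rfl fun y _ => gswap_other n x4 x5 x2 x3 d42.symm d52.symm d43.symm d53.symm y]
    rw [Finset.sum_neg_distrib]
    ring
  have hCt : (Cm n)ᵀ.mulVec v = 0 := by
    funext x
    rw [Ct_mulVec_apply]
    show ∑ A : Vtx n, (fun s => if x ∈ s then (1:ℝ) else 0) A.1 * v A = (0 : Fin n → ℝ) x
    rw [Pi.zero_apply]
    rcases eq_or_ne x x0 with rfl | hxa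
    · exact sum_cancel n _ v (fun s => if x0 ∈ s then (1:ℝ) else 0) hflip1 (fun A => by
        show (if x0 ∈ A.1.image (Equiv.swap x2 x3) then (1:ℝ) else 0) = _
        exact if_congr (mem_image_swap n x2 x3 x0 d20.symm d30.symm A.1) rfl rfl)
    rcases eq_or_ne x x1 with rfl | hxb
    · exact sum_cancel n _ v (fun s => if x1 ∈ s then (1:ℝ) else 0) hflip1 (fun A => by
        show (if x1 ∈ A.1.image (Equiv.swap x2 x3) then (1:ℝ) else 0) = _
        exact if_congr (mem_image_swap n x2 x3 x1 d21.symm d31.symm A.1) rfl rfl)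
    · exact sum_cancel n _ v (fun s => if x ∈ s then (1:ℝ) else 0) hflip0 (fun A => by
        show (if x ∈ A.1.image (Equiv.swap x0 x1) then (1:ℝ) else 0) = _
        exact if_congr (mem_image_swap n x0 x1 x hxa hxb A.1) rfl rfl)
  have hDt : (Dm n)ᵀ.mulVec v = 0 := by
    funext p
    rw [Dt_mulVec_apply]
    show ∑ A : Vtx n, (fun s => if p.1 ⊆ s then (1:ℝ) else 0) A.1 * v A = (0 : Pr n → ℝ) p
    rw [Pi.zero_apply]
    by_cases hp0 : x0 ∉ p.1 ∧ x1 ∉ p.1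
    · exact sum_cancel n _ v (fun s => if p.1 ⊆ s then (1:ℝ) else 0) hflip0 (fun A => by
        show (if p.1 ⊆ A.1.image (Equiv.swap x0 x1) then (1:ℝ) else 0) = _
        exact if_congr (subset_image_swap n x0 x1 p.1 hp0.1 hp0.2 A.1) rfl rfl)
    by_cases hp1 : x2 ∉ p.1 ∧ x3 ∉ p.1
    · exact sum_cancel n _ v (fun s => if p.1 ⊆ s then (1:ℝ) else 0) hflip1 (fun A => by
        show (if p.1 ⊆ A.1.image (Equiv.swap x2 x3) then (1:ℝ) else 0) = _
        exact if_congr (subset_image_swap n x2 x3 p.1 hp1.1 hp1.2 A.1) rfl rfl)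
    · -- p meets {x0,x1} and {x2,x3}, hence avoids {x4,x5}
      rw [not_and_or, not_not, not_not] at hp0 hp1
      obtain ⟨y1, hy1, hy1m⟩ : ∃ y, y ∈ p.1 ∧ (y = x0 ∨ y = x1) := by
        rcases hp0 with h | h
        exacts [⟨x0, h, Or.inl rfl⟩, ⟨x1, h, Or.inr rfl⟩]
      obtain ⟨y2, hy2, hy2m⟩ : ∃ y, y ∈ p.1 ∧ (y = x2 ∨ y = x3) := by
        rcases hp1 with h | h
        exacts [⟨x2, h, Or.inl rfl⟩, ⟨x3, h, Or.inr rfl⟩]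
      have hy12 : y1 ≠ y2 := by
        rcases hy1m with rfl | rfl <;> rcases hy2m with rfl | rfl
        exacts [d20.symm, d30.symm, d21.symm, d31.symm]
      have hpeq : ({y1, y2} : Finset (Fin n)) = p.1 := by
        apply Finset.eq_of_subset_of_card_le
        · intro y hy
          rcases Finset.mem_insert.mp hy with rfl | hy
          · exact hy1
          · exact (Finset.mem_singleton.mp hy) ▸ hy2
        · rw [p.2, Finset.card_insert_of_notMem (by simpa using hy12), Finset.card_singleton]
      have hp4 : x4 ∉ p.1 := by
        rw [← hpeq]
        intro hmem
        rcases Finset.mem_insert.mp hmem with e | e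
        · rcases hy1m with rfl | rfl
          · exact d40 e
          · exact d41 e
        · rcases hy2m with rfl | rfl
          · exact d42 (Finset.mem_singleton.mp e)
          · exact d43 (Finset.mem_singleton.mp e)
      have hp5 : x5 ∉ p.1 := by
        rw [← hpeq]
        intro hmem
        rcases Finset.mem_insert.mp hmem with e | e
        · rcases hy1m with rfl | rfl
          · exact d50 e
          · exact d51 e
        · rcases hy2m with rfl | rfl
          · exact d52 (Finset.mem_singleton.mp e)
          · exact d53 (Finset.mem_singleton.mp e)
      exact sum_cancel n _ v (fun s => if p.1 ⊆ s then (1:ℝ) else 0) hflip2 (fun A => by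
        show (if p.1 ⊆ A.1.image (Equiv.swap x4 x5) then (1:ℝ) else 0) = _
        exact if_congr (subset_image_swap n x4 x5 p.1 hp4 hp5 A.1) rfl rfl)
  refine ⟨v, ?_, ?_⟩
  · -- v nonzero at {x0, x2, x4}
    have hm24 : x2 ∉ ({x4} : Finset (Fin n)) := by simpa using d42.symm
    have hm024 : x0 ∉ ({x2, x4} : Finset (Fin n)) := by
      simp [d20.symm, d40.symm]
    have hcard : ({x0, x2, x4} : Finset (Fin n)).card = 3 := by
      rw [Finset.card_insert_of_notMem hm024, Finset.card_insert_of_notMem hm24,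
        Finset.card_singleton]
    intro hzero
    have hz := congrFun hzero ⟨{x0, x2, x4}, hcard⟩
    rw [hvdef] at hz
    simp only [Pi.zero_apply] at hz
    rw [Finset.sum_insert hm024, Finset.sum_insert hm24, Finset.sum_singleton,
      Finset.sum_insert hm024, Finset.sum_insert hm24, Finset.sum_singleton,
      Finset.sum_insert hm024, Finset.sum_insert hm24, Finset.sum_singleton] at hz
    simp only [gp] at hz
    simp only [if_pos rfl, if_neg d01.symm, if_neg d20, if_neg d21, if_neg d40, if_neg d41,
      if_neg d20.symm, if_neg d23.symm, if_neg d42, if_neg d43, if_neg d30.symm,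
      if_neg d40.symm, if_neg d50.symm, if_neg d42.symm, if_neg d52.symm, if_neg d45.symm, if_neg d01, if_neg d23, if_neg d45] at hz
    norm_num at hz
  · rw [hAdj n hn]
    rw [Matrix.add_mulVec, Matrix.sub_mulVec, Matrix.smul_mulVec,
      Matrix.smul_mulVec, Matrix.one_mulVec]
    have hXv : (Xm n).mulVec v = 0 := by
      unfold Xm
      rw [← Matrix.mulVec_mulVec, hCt, Matrix.mulVec_zero]
    have hYv : (Ym n).mulVec v = 0 := by
      unfold Ym
      rw [← Matrix.mulVec_mulVec, hDt, Matrix.mulVec_zero]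
    rw [hXv, hYv]
    funext A
    simp only [Pi.add_apply, Pi.sub_apply, Pi.smul_apply, Pi.zero_apply, smul_eq_mul]
    ring

end JohnsonAux


open scoped BigOperators

/-- For `n ≥ 7`, the spectrum of the adjacency matrix of `J(n,3,{1})` is exactly
`{3(n-3)(n-4)/2, (n-4)(n-9)/2, -2n+11, 3}`, and `-2n+11` is the smallest eigenvalue. -/
theorem johnson_three_one_spectrum (n : ℕ) (hn : 7 ≤ n) :
    spectrum ℝ ((johnsonGraph n 3 {1}).adjMatrix ℝ) =
      {3 * ((n : ℝ) - 3) * ((n : ℝ) - 4) / 2, ((n : ℝ) - 4) * ((n : ℝ) - 9) / 2,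
        -2 * (n : ℝ) + 11, 3} ∧
    ∀ μ ∈ spectrum ℝ ((johnsonGraph n 3 {1}).adjMatrix ℝ), -2 * (n : ℝ) + 11 ≤ μ := by
  have hnR : (7:ℝ) ≤ (n:ℝ) := by exact_mod_cast hn
  have hspec : spectrum ℝ ((johnsonGraph n 3 {1}).adjMatrix ℝ) =
      {3 * ((n : ℝ) - 3) * ((n : ℝ) - 4) / 2, ((n : ℝ) - 4) * ((n : ℝ) - 9) / 2,
        -2 * (n : ℝ) + 11, 3} := by
    ext μ
    simp only [Set.mem_insert_iff, Set.mem_singleton_iff]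
    constructor
    · intro hμ
      obtain ⟨v, hv0, hv⟩ :=
        (JohnsonAux.mem_spectrum_iff n ((johnsonGraph n 3 {1}).adjMatrix ℝ) μ).mp hμ
      have key : ∀ (θ c : ℝ),
          ((johnsonGraph n 3 {1}).adjMatrix ℝ - θ • 1).mulVec (c • v) = (c * (μ - θ)) • v := by
        intro θ c
        rw [Matrix.mulVec_smul, Matrix.sub_mulVec, hv, Matrix.smul_mulVec,
          Matrix.one_mulVec, ← sub_smul, smul_smul]
      have key1 : ∀ (θ : ℝ),
          ((johnsonGraph n 3 {1}).adjMatrix ℝ - θ • 1).mulVec v = (μ - θ) • v := by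
        intro θ
        rw [Matrix.sub_mulVec, hv, Matrix.smul_mulVec, Matrix.one_mulVec, ← sub_smul]
      have h := congrArg (fun N : Matrix (JohnsonAux.Vtx n) (JohnsonAux.Vtx n) ℝ =>
        N.mulVec v) (JohnsonAux.prodZero n hn)
      rw [← Matrix.mulVec_mulVec, ← Matrix.mulVec_mulVec, ← Matrix.mulVec_mulVec,
        key1 (-2*(n:ℝ)+11), key 3 _, key (((n:ℝ)-4)*((n:ℝ)-9)/2) _,
        key (3*((n:ℝ)-3)*((n:ℝ)-4)/2) _, Matrix.zero_mulVec] at h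
      have hc := (smul_eq_zero.mp h).resolve_right hv0
      rcases mul_eq_zero.mp hc with hc | hc
      rcases mul_eq_zero.mp hc with hc | hc
      rcases mul_eq_zero.mp hc with hc | hc
      · exact Or.inr (Or.inr (Or.inl (sub_eq_zero.mp hc)))
      · exact Or.inr (Or.inr (Or.inr (sub_eq_zero.mp hc)))
      · exact Or.inr (Or.inl (sub_eq_zero.mp hc))
      · exact Or.inl (sub_eq_zero.mp hc)
    · intro hμ
      apply (JohnsonAux.mem_spectrum_iff n ((johnsonGraph n 3 {1}).adjMatrix ℝ) μ).mpr
      rcases hμ with rfl | rfl | rfl | rfl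
      · refine ⟨fun _ => 1, ?_, JohnsonAux.eig0 n hn⟩
        intro hzero
        have h0 : (0:ℕ) < n := by omega
        have h1 : (1:ℕ) < n := by omega
        have h2 : (2:ℕ) < n := by omega
        have hcard : ({⟨0,h0⟩, ⟨1,h1⟩, ⟨2,h2⟩} : Finset (Fin n)).card = 3 := by
          rw [Finset.card_insert_of_notMem (by simp [Fin.ext_iff]),
            Finset.card_insert_of_notMem (by simp [Fin.ext_iff]),
            Finset.card_singleton]
        have := congrFun hzero ⟨_, hcard⟩
        norm_num at this
      · obtain ⟨v, hv0, hv⟩ := JohnsonAux.eig1 n hn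
        exact ⟨v, hv0, hv⟩
      · obtain ⟨v, hv0, hv⟩ := JohnsonAux.eig2 n hn
        exact ⟨v, hv0, hv⟩
      · obtain ⟨v, hv0, hv⟩ := JohnsonAux.eig3 n hn
        exact ⟨v, hv0, hv⟩
  refine ⟨hspec, ?_⟩
  intro μ hμ
  rw [hspec] at hμ
  simp only [Set.mem_insert_iff, Set.mem_singleton_iff] at hμ
  rcases hμ with rfl | rfl | rfl | rfl
  · nlinarith
  · nlinarith
  · linarith
  · nlinarith
end

section
/- Any (n,k,L)-system with L = {ℓ} a singleton, where every pair of distinct members intersects in exactly ℓ elements, has size at most max(n, C(n,k)) — more precisely, by the Deza–Erdős–Frankl bound with r = 1, its size is at most (n-ℓ)/(k-ℓ). -/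
/-- Petal-counting bound for sunflowers. -/
lemma sunflower_count {n k ℓ : ℕ}
    (F : Finset (Finset (Fin n))) (I : Finset (Fin n)) (hI : I.card = ℓ)
    (hIsub : ∀ A ∈ F, I ⊆ A)
    (hcore : ∀ A ∈ F, ∀ B ∈ F, A ≠ B → A ∩ B = I)
    (hcard : ∀ A ∈ F, A.card = k) :
    F.card * (k - ℓ) ≤ n - ℓ := by
  have hdisj : ∀ A ∈ F, ∀ B ∈ F, A ≠ B → Disjoint (A \ I) (B \ I) := by
    intro A hA B hB hAB
    rw [Finset.disjoint_left]
    intro x hx hx'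
    have : x ∈ A ∩ B := Finset.mem_inter.2 ⟨(Finset.mem_sdiff.1 hx).1, (Finset.mem_sdiff.1 hx').1⟩
    rw [hcore A hA B hB hAB] at this
    exact (Finset.mem_sdiff.1 hx).2 this
  have hsum : (F.biUnion (fun A => A \ I)).card = ∑ A ∈ F, (A \ I).card :=
    Finset.card_biUnion hdisj
  have hpet : ∀ A ∈ F, (A \ I).card = k - ℓ := by
    intro A hA
    rw [Finset.card_sdiff_of_subset (hIsub A hA), hcard A hA, hI]
  have hsub : F.biUnion (fun A => A \ I) ⊆ Finset.univ \ I := by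
    intro x hx
    obtain ⟨A, hA, hxA⟩ := Finset.mem_biUnion.1 hx
    exact Finset.mem_sdiff.2 ⟨Finset.mem_univ x, (Finset.mem_sdiff.1 hxA).2⟩
  have hcardsub : (Finset.univ \ I).card = n - ℓ := by
    rw [Finset.card_sdiff_of_subset (Finset.subset_univ I), hI, Finset.card_univ, Fintype.card_fin]
  calc F.card * (k - ℓ) = ∑ A ∈ F, (A \ I).card := by
        rw [Finset.sum_congr rfl hpet, Finset.sum_const, smul_eq_mul]
    _ = (F.biUnion (fun A => A \ I)).card := hsum.symm
    _ ≤ (Finset.univ \ I).card := Finset.card_le_card hsub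
    _ = n - ℓ := hcardsub

/-- A large family with constant pairwise intersection size is a sunflower. -/
lemma big_is_sunflower {n k ℓ : ℕ} (hk : 0 < k)
    (F : Finset (Finset (Fin n)))
    (hcard : ∀ A ∈ F, A.card = k)
    (hInt : ∀ A ∈ F, ∀ B ∈ F, A ≠ B → (A ∩ B).card = ℓ)
    (hbig : 2 ^ k * k + 2 ≤ F.card) :
    ∃ I : Finset (Fin n), I.card = ℓ ∧ (∀ A ∈ F, I ⊆ A) ∧
      (∀ A ∈ F, ∀ B ∈ F, A ≠ B → A ∩ B = I) := by
  have hFne : F.Nonempty := Finset.card_pos.1 (by omega)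
  obtain ⟨A, hA⟩ := hFne
  have hmaps : ∀ B ∈ F.erase A, A ∩ B ∈ A.powerset := by
    intro B hB
    exact Finset.mem_powerset.2 Finset.inter_subset_left
  have hcardA : A.powerset.card = 2 ^ k := by
    rw [Finset.card_powerset, hcard A hA]
  have hlt : A.powerset.card * k < (F.erase A).card := by
    rw [hcardA, Finset.card_erase_of_mem hA]; omega
  obtain ⟨I, _hImem, hIfib⟩ :=
    Finset.exists_lt_card_fiber_of_mul_lt_card_of_maps_to hmaps hlt
  set S := (F.erase A).filter (fun B => A ∩ B = I) with hS
  have hSsub : S ⊆ F.erase A := Finset.filter_subset _ _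
  have hStr : ∀ B ∈ S, A ∩ B = I := fun B hB => (Finset.mem_filter.1 hB).2
  obtain ⟨B₀, hB₀⟩ : S.Nonempty := Finset.card_pos.1 (by omega)
  have hB₀F : B₀ ∈ F := Finset.mem_of_mem_erase (hSsub hB₀)
  have hB₀A : B₀ ≠ A := Finset.ne_of_mem_erase (hSsub hB₀)
  have hIcard : I.card = ℓ := by
    rw [← hStr B₀ hB₀]; exact hInt A hA B₀ hB₀F (Ne.symm hB₀A)
  have hIA : I ⊆ A := by rw [← hStr B₀ hB₀]; exact Finset.inter_subset_left
  have hpairI : ∀ B ∈ F, ∀ C ∈ F, B ≠ C → A ∩ B = I → A ∩ C = I → B ∩ C = I := by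
    intro B hB C hC hBC hBI hCI
    have hsub : I ⊆ B ∩ C := by
      intro x hx
      exact Finset.mem_inter.2 ⟨(Finset.mem_inter.1 (hBI ▸ hx)).2,
        (Finset.mem_inter.1 (hCI ▸ hx)).2⟩
    exact (Finset.eq_of_subset_of_card_le hsub
      (by rw [hInt B hB C hC hBC, hIcard])).symm
  have halltr : ∀ B ∈ F.erase A, A ∩ B = I := by
    by_contra hcon
    push_neg at hcon
    obtain ⟨D, hD, hDtr⟩ := hcon
    have hDF : D ∈ F := Finset.mem_of_mem_erase hD
    have hDA : D ≠ A := Finset.ne_of_mem_erase hD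
    have hDS : D ∉ S := fun h => hDtr (hStr D h)
    have hne : Nonempty (Fin n) := by
      have : D.Nonempty := Finset.card_pos.1 (by rw [hcard D hDF]; omega)
      exact ⟨this.choose⟩
    have key : ∀ B : Finset (Fin n), ∃ x : Fin n, B ∈ S → x ∈ (D ∩ B) \ A := by
      intro B
      by_cases hB : B ∈ S
      · have hBF : B ∈ F := Finset.mem_of_mem_erase (hSsub hB)
        have hBD : D ≠ B := fun h => hDS (h ▸ hB)
        have h1 : (D ∩ B).card = ℓ := hInt D hDF B hBF hBD
        have h2 : (D ∩ B) ∩ A ⊆ (A ∩ D) ∩ I := by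
          intro x hx
          simp only [Finset.mem_inter] at hx ⊢
          refine ⟨⟨hx.2, hx.1.1⟩, ?_⟩
          rw [← hStr B hB]
          exact Finset.mem_inter.2 ⟨hx.2, hx.1.2⟩
        have h3 : (A ∩ D) ∩ I ⊂ A ∩ D := by
          refine (Finset.ssubset_iff_of_subset Finset.inter_subset_left).2 ?_
          by_contra hc
          push_neg at hc
          apply hDtr
          apply Finset.eq_of_subset_of_card_le
          · intro x hx
            exact (Finset.mem_inter.1 (hc x hx)).2
          · rw [hIcard, hInt A hA D hDF (Ne.symm hDA)]
        have h4 : ((D ∩ B) ∩ A).card < ℓ := by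
          calc ((D ∩ B) ∩ A).card ≤ ((A ∩ D) ∩ I).card := Finset.card_le_card h2
            _ < (A ∩ D).card := Finset.card_lt_card h3
            _ = ℓ := hInt A hA D hDF (Ne.symm hDA)
        have h5 := Finset.card_inter_add_card_sdiff (D ∩ B) A
        have : ((D ∩ B) \ A).Nonempty := by
          rw [← Finset.card_pos]; omega
        exact ⟨this.choose, fun _ => this.choose_spec⟩
      · exact ⟨Classical.arbitrary _, fun h => absurd h hB⟩
    choose f hf using key
    have hmapsf : ∀ B ∈ S, f B ∈ D \ A := by
      intro B hB
      have := hf B hB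
      rw [Finset.mem_sdiff] at this ⊢
      exact ⟨(Finset.mem_inter.1 this.1).1, this.2⟩
    have hinj : Set.InjOn f S := by
      intro B hB C hC hfBC
      by_contra hne
      have hBF : B ∈ F := Finset.mem_of_mem_erase (hSsub hB)
      have hCF : C ∈ F := Finset.mem_of_mem_erase (hSsub hC)
      have hBC : B ∩ C = I := hpairI B hBF C hCF hne (hStr B hB) (hStr C hC)
      have h1 := hf B hB
      have h2 := hf C hC
      rw [Finset.mem_sdiff, Finset.mem_inter] at h1 h2
      have : f B ∈ B ∩ C := Finset.mem_inter.2 ⟨h1.1.2, hfBC ▸ h2.1.2⟩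
      rw [hBC] at this
      exact h1.2 (hIA this)
    have hle : S.card ≤ (D \ A).card := Finset.card_le_card_of_injOn f hmapsf hinj
    have hDAcard : (D \ A).card + (D ∩ A).card = k := by
      have := Finset.card_inter_add_card_sdiff D A
      rw [hcard D hDF] at this
      omega
    have hDAint : (D ∩ A).card = ℓ := by
      rw [Finset.inter_comm]; exact hInt A hA D hDF (Ne.symm hDA)
    omega
  refine ⟨I, hIcard, ?_, ?_⟩
  · intro B hB
    by_cases hBA : B = A
    · exact hBA ▸ hIA
    · rw [← halltr B (Finset.mem_erase.2 ⟨hBA, hB⟩)]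
      exact Finset.inter_subset_right
  · intro B hB C hC hBC
    by_cases hBA : B = A
    · subst hBA
      exact halltr C (Finset.mem_erase.2 ⟨Ne.symm hBC, hC⟩)
    · by_cases hCA : C = A
      · subst hCA
        rw [Finset.inter_comm]
        exact halltr B (Finset.mem_erase.2 ⟨hBA, hB⟩)
      · exact hpairI B hB C hC hBC (halltr B (Finset.mem_erase.2 ⟨hBA, hB⟩))
          (halltr C (Finset.mem_erase.2 ⟨hCA, hC⟩))

/-- Deza–Erdős–Frankl bound in the singleton case: for `n` sufficiently large in
terms of `k`, any family of `k`-subsets of an `n`-set whose distinct members pairwise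
intersect in exactly `ℓ` elements has size at most `(n-ℓ)/(k-ℓ)`. -/
theorem def_singleton_bound (k : ℕ) :
    ∃ n₀ : ℕ, ∀ n : ℕ, n₀ ≤ n → k ≤ n → ∀ ℓ : ℕ, ℓ < k →
      ∀ F : Finset (Finset (Fin n)),
        (∀ A ∈ F, A.card = k) →
        (∀ A ∈ F, ∀ B ∈ F, A ≠ B → (A ∩ B).card = ℓ) →
        (F.card : ℚ) ≤ ((n : ℚ) - ℓ) / ((k : ℚ) - ℓ) := by
  refine ⟨(2 ^ k * k + 2) * k, ?_⟩
  intro n hn₀ hkn ℓ hℓk F hcard hInt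
  have hkpos : (0 : ℚ) < (k : ℚ) - ℓ := by
    have : (ℓ : ℚ) < k := by exact_mod_cast hℓk
    linarith
  rw [le_div_iff₀ hkpos]
  by_cases hbig : 2 ^ k * k + 2 ≤ F.card
  · obtain ⟨I, hI, hIsub, hcore⟩ := big_is_sunflower (by omega) F hcard hInt hbig
    have hcount : F.card * (k - ℓ) ≤ n - ℓ := sunflower_count F I hI hIsub hcore hcard
    have hln : ℓ ≤ n := le_trans hℓk.le hkn
    have hc : ((F.card * (k - ℓ) : ℕ) : ℚ) ≤ ((n - ℓ : ℕ) : ℚ) := Nat.cast_le.2 hcount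
    push_cast [Nat.cast_sub hℓk.le, Nat.cast_sub hln] at hc
    linarith
  · push_neg at hbig
    have h1 : (F.card : ℚ) ≤ (2 ^ k * k + 1 : ℕ) := by exact_mod_cast Nat.lt_succ_iff.1 hbig
    have h2 : ((2 ^ k * k + 2) * k : ℕ) ≤ (n : ℚ) := by exact_mod_cast hn₀
    have h3 : (ℓ : ℚ) ≤ k := by exact_mod_cast hℓk.le
    have h4 : (0 : ℚ) ≤ F.card := by positivity
    push_cast at h1 h2
    nlinarith [h1, h2, h3, h4, hkpos]
end
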